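/- arXiv:0805.2752 — 14 statements merged into one kernel-verified Lean document; each statement's English description precedes it below -/
import Mathlib

section
/- Let ε, α, β be real numbers with α ≥ 1, β > 0, and define g : [1, ∞) → ℝ by g(t) = t^ε − α·t^(ε−1) − β; let t_b ∈ [1, ∞) satisfy g(t_b) = 0. If 0 < ε ≤ 1 then α + β^(1/ε) ≤ t_b ≤ (1/ε)·α + β^(1/ε). If ε > 1 then (1/ε)·α + β^(1/ε) < t_b < α + β^(1/ε). -/
/-!
Put `φ t = t ^ ε - α * t ^ (ε - 1) = t ^ (ε - 1) * (t - α)` and `s = β ^ (1 / ε)`. The root `t_b`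
solves `φ t_b = s ^ ε`, so `t_b > α`, and `φ` is strictly increasing on `[α, ∞)`; hence each bound
follows from comparing `φ` with `s ^ ε` at `α + s` and at `α / ε + s`. At `α + s` this compares
`(α + s) ^ (ε - 1) * s` with `s ^ (ε - 1) * s`. At `u = α / ε + s`, `φ u` is the value at `s` of the
tangent line of `t ↦ t ^ ε` at `u`, which lies above `s ^ ε` for `ε ≤ 1` (concavity) and strictly
below it for `ε > 1` (strict convexity).
-/

open Real Set

namespace Real

lemma rpow_le_rpow_add_mul_sub {ε u s : ℝ} (hε₀ : 0 ≤ ε) (hε₁ : ε ≤ 1) (hu : 0 < u)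
    (hs : 0 ≤ s) : s ^ ε ≤ u ^ ε + ε * u ^ (ε - 1) * (s - u) := by
  have hbern := rpow_one_add_le_one_add_mul_self (s := s / u - 1)
    (by linarith [div_nonneg hs hu.le]) hε₀ hε₁
  rw [add_sub_cancel, div_rpow hs hu.le, div_le_iff₀ (rpow_pos_of_pos hu ε)] at hbern
  calc s ^ ε ≤ (1 + ε * (s / u - 1)) * u ^ ε := hbern
    _ = u ^ ε + ε * u ^ (ε - 1) * (s - u) := by
      rw [rpow_sub_one hu.ne']; field_simp

lemma rpow_add_mul_sub_lt_rpow {ε u s : ℝ} (hε : 1 < ε) (hu : 0 < u) (hs : 0 ≤ s)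
    (hsu : s ≠ u) : u ^ ε + ε * u ^ (ε - 1) * (s - u) < s ^ ε := by
  have hne : s / u - 1 ≠ 0 := by
    rwa [sub_ne_zero, ne_eq, div_eq_one_iff_eq hu.ne']
  have hbern := one_add_mul_self_lt_rpow_one_add
    (by linarith [div_nonneg hs hu.le]) hne hε
  rw [add_sub_cancel, div_rpow hs hu.le, lt_div_iff₀ (rpow_pos_of_pos hu ε)] at hbern
  calc u ^ ε + ε * u ^ (ε - 1) * (s - u) = (1 + ε * (s / u - 1)) * u ^ ε := by
        rw [rpow_sub_one hu.ne']; field_simp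
    _ < s ^ ε := hbern

end Real

section RootBounds

variable {ε α s t : ℝ}

lemma rpow_sub_mul_rpow_sub_one_eq (ht : 0 < t) :
    t ^ ε - α * t ^ (ε - 1) = t ^ (ε - 1) * (t - α) := by
  rw [rpow_sub_one ht.ne']; field_simp

lemma strictMonoOn_rpow_sub_mul_rpow_sub_one (hε : 0 < ε) (hα : 0 < α) :
    StrictMonoOn (fun t ↦ t ^ ε - α * t ^ (ε - 1)) (Ici α) := by
  intro x (hx : α ≤ x) y _ hxy
  have hx₀ : 0 < x := hα.trans_le hx
  rcases le_or_gt ε 1 with hε₁ | hε₁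
  · have hpow : x ^ ε < y ^ ε := rpow_lt_rpow hx₀.le hxy hε
    have hpow' : y ^ (ε - 1) ≤ x ^ (ε - 1) := rpow_le_rpow_of_nonpos hx₀ hxy.le (by linarith)
    nlinarith
  · simp only [rpow_sub_mul_rpow_sub_one_eq hx₀, rpow_sub_mul_rpow_sub_one_eq (hx₀.trans hxy)]
    calc x ^ (ε - 1) * (x - α) ≤ y ^ (ε - 1) * (x - α) := by gcongr
      _ < y ^ (ε - 1) * (y - α) := by
          gcongr; exact rpow_pos_of_pos (hx₀.trans hxy) _

lemma rpow_sub_mul_rpow_sub_one_add_le (hε : ε ≤ 1) (hα : 0 ≤ α) (hs : 0 < s) :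
    (α + s) ^ ε - α * (α + s) ^ (ε - 1) ≤ s ^ ε := by
  rw [rpow_sub_mul_rpow_sub_one_eq (by linarith), add_sub_cancel_left]
  calc (α + s) ^ (ε - 1) * s ≤ s ^ (ε - 1) * s :=
        mul_le_mul_of_nonneg_right (rpow_le_rpow_of_nonpos hs (by linarith) (by linarith)) hs.le
    _ = s ^ ε := by rw [rpow_sub_one hs.ne', div_mul_cancel₀ _ hs.ne']

lemma rpow_lt_rpow_sub_mul_rpow_sub_one_add (hε : 1 < ε) (hα : 0 < α) (hs : 0 < s) :
    s ^ ε < (α + s) ^ ε - α * (α + s) ^ (ε - 1) := by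
  rw [rpow_sub_mul_rpow_sub_one_eq (by linarith), add_sub_cancel_left]
  calc s ^ ε = s ^ (ε - 1) * s := by rw [rpow_sub_one hs.ne', div_mul_cancel₀ _ hs.ne']
    _ < (α + s) ^ (ε - 1) * s :=
        mul_lt_mul_of_pos_right (rpow_lt_rpow hs.le (by linarith) (by linarith)) hs

lemma rpow_le_rpow_sub_mul_rpow_sub_one_div_add (hε₀ : 0 < ε) (hε₁ : ε ≤ 1) (hα : 0 ≤ α)
    (hs : 0 < s) : s ^ ε ≤ (α / ε + s) ^ ε - α * (α / ε + s) ^ (ε - 1) := by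
  have htangent := rpow_le_rpow_add_mul_sub hε₀.le hε₁ (u := α / ε + s) (by positivity) hs.le
  convert htangent using 1
  field_simp
  ring

lemma rpow_sub_mul_rpow_sub_one_div_add_lt (hε : 1 < ε) (hα : 0 < α) (hs : 0 < s) :
    (α / ε + s) ^ ε - α * (α / ε + s) ^ (ε - 1) < s ^ ε := by
  have hαε : 0 < α / ε := div_pos hα (zero_lt_one.trans hε)
  have htangent := rpow_add_mul_sub_lt_rpow hε (u := α / ε + s) (by positivity) hs.le
    (by linarith)
  convert htangent using 1
  field_simp
  ring

end RootBounds

/-- bounds on the root t_b of g(t) = t^ε − α·t^(ε−1) − β in [1, ∞). -/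
theorem stmt1 (ε α β : ℝ) (hε : 0 < ε) (hα : 1 ≤ α) (hβ : 0 < β)
    (tb : ℝ) (htb : tb ∈ Set.Ici (1 : ℝ))
    (hroot : tb ^ ε - α * tb ^ (ε - 1) - β = 0) :
    (ε ≤ 1 → α + β ^ (1 / ε) ≤ tb ∧ tb ≤ (1 / ε) * α + β ^ (1 / ε)) ∧
    (1 < ε → (1 / ε) * α + β ^ (1 / ε) < tb ∧ tb < α + β ^ (1 / ε)) := by
  have hα₀ : 0 < α := zero_lt_one.trans_le hα
  have htb₀ : 0 < tb := zero_lt_one.trans_le htb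
  set s := β ^ (1 / ε)
  have hs : 0 < s := rpow_pos_of_pos hβ _
  have hφtb : tb ^ ε - α * tb ^ (ε - 1) = s ^ ε := by
    rw [← rpow_mul hβ.le, one_div_mul_cancel hε.ne', rpow_one]; linarith
  have hαtb : α < tb := by
    rw [rpow_sub_mul_rpow_sub_one_eq htb₀] at hφtb
    exact sub_pos.1 (pos_of_mul_pos_right (hφtb ▸ rpow_pos_of_pos hs ε)
      (rpow_pos_of_pos htb₀ _).le)
  have hφ := strictMonoOn_rpow_sub_mul_rpow_sub_one hε hα₀
  have htb_mem : tb ∈ Ici α := hαtb.le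
  have hαs_mem : α + s ∈ Ici α := le_add_of_nonneg_right hs.le
  rw [one_div_mul_eq_div]
  refine ⟨fun hε₁ ↦ ⟨?_, ?_⟩, fun hε₁ ↦ ⟨?_, ?_⟩⟩
  · refine (hφ.le_iff_le hαs_mem htb_mem).1 ?_
    simpa only [hφtb] using rpow_sub_mul_rpow_sub_one_add_le hε₁ hα₀.le hs
  · have hu_mem : α / ε + s ∈ Ici α :=
      le_add_of_le_of_nonneg ((le_div_iff₀ hε).2 (by nlinarith)) hs.le
    refine (hφ.le_iff_le htb_mem hu_mem).1 ?_
    simpa only [hφtb] using rpow_le_rpow_sub_mul_rpow_sub_one_div_add hε hε₁ hα₀.le hs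
  · -- `α / ε + s` may lie below `α`, so only monotonicity from `tb` upwards is available.
    refine lt_of_not_ge fun hu ↦ ?_
    have hφu := hφ.monotoneOn htb_mem (htb_mem.trans hu) hu
    rw [hφtb] at hφu
    exact hφu.not_gt (rpow_sub_mul_rpow_sub_one_div_add_lt hε₁ hα₀ hs)
  · refine (hφ.lt_iff_lt htb_mem hαs_mem).1 ?_
    simpa only [hφtb] using rpow_lt_rpow_sub_mul_rpow_sub_one_add hε₁ hα₀ hs
end

section
/- For all real numbers x > 0, y > 0 and every real ε with −1 < ε ≤ 1, it holds that x^(1+ε)/(1+ε) − y^(1+ε)/(1+ε) ≤ (x² − y²)/(2·y^(1−ε)). -/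
/-! The inequality is the tangent-line bound for the concave map `t ↦ t ^ ((1 + ε) / 2)` at
`t = y ²`, evaluated at `t = x ²`; the tangent-line bound itself is weighted AM-GM for the
pair `a, b` with weights `p, 1 - p`, divided by `b ^ (1 - p)`. -/

open Real

theorem rpow_sub_rpow_le_mul_rpow_mul_sub {a b p : ℝ} (ha : 0 ≤ a) (hb : 0 < b) (hp₀ : 0 ≤ p)
    (hp₁ : p ≤ 1) : a ^ p - b ^ p ≤ p * b ^ (p - 1) * (a - b) := by
  have amgm : a ^ p * b ^ (1 - p) ≤ p * a + (1 - p) * b :=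
    geom_mean_le_arith_mean2_weighted hp₀ (by linarith) ha hb.le (by ring)
  have hcancel : b ^ (1 - p) * b ^ (p - 1) = 1 := by
    rw [← rpow_add hb, show 1 - p + (p - 1) = 0 by ring, rpow_zero]
  have hb_mul : b * b ^ (p - 1) = b ^ p := by
    rw [mul_comm, ← rpow_add_one hb.ne', sub_add_cancel]
  have hpow : 0 ≤ b ^ (p - 1) := (rpow_pos_of_pos hb _).le
  calc a ^ p - b ^ p = a ^ p * b ^ (1 - p) * b ^ (p - 1) - b ^ p := by
        rw [mul_assoc, hcancel, mul_one]
    _ ≤ (p * a + (1 - p) * b) * b ^ (p - 1) - b ^ p := by gcongr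
    _ = p * b ^ (p - 1) * (a - b) := by rw [← hb_mul]; ring

/-- for x, y > 0 and −1 < ε ≤ 1,
x^(1+ε)/(1+ε) − y^(1+ε)/(1+ε) ≤ (x² − y²)/(2·y^(1−ε)). -/
theorem stmt2 (x y ε : ℝ) (hx : 0 < x) (hy : 0 < y) (hε1 : -1 < ε) (hε2 : ε ≤ 1) :
    x ^ (1 + ε) / (1 + ε) - y ^ (1 + ε) / (1 + ε) ≤ (x ^ 2 - y ^ 2) / (2 * y ^ (1 - ε)) := by
  have sq_rpow : ∀ {z : ℝ}, 0 < z → ∀ q : ℝ, (z ^ 2) ^ q = z ^ (2 * q) := fun hz q => by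
    rw [← rpow_natCast, ← rpow_mul hz.le, Nat.cast_ofNat]
  have tangent := rpow_sub_rpow_le_mul_rpow_mul_sub (sq_nonneg x) (pow_pos hy 2)
    (p := (1 + ε) / 2) (by linarith) (by linarith)
  rw [sq_rpow hx, sq_rpow hy, sq_rpow hy, show 2 * ((1 + ε) / 2) = 1 + ε by ring,
    show 2 * ((1 + ε) / 2 - 1) = -(1 - ε) by ring, rpow_neg hy.le] at tangent
  have hyε : 0 < y ^ (1 - ε) := rpow_pos_of_pos hy _
  rw [div_sub_div_same, div_le_iff₀ (by linarith)]
  calc x ^ (1 + ε) - y ^ (1 + ε) ≤ (1 + ε) / 2 * (y ^ (1 - ε))⁻¹ * (x ^ 2 - y ^ 2) := tangent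
    _ = (x ^ 2 - y ^ 2) / (2 * y ^ (1 - ε)) * (1 + ε) := by field_simp
end

section
/- For every real t ≥ 1 and every real ε with 0 < ε ≤ 1, it holds that (t^ε − 1)/ε ≤ t^ε·(ln t)^(1−ε) − ⌊ε⌋, where ⌊ε⌋ denotes the integer part of ε (so ⌊ε⌋ = 0 for 0 < ε < 1 and ⌊ε⌋ = 1 for ε = 1). -/
/-!
Write `L = log t`, so that `t ^ ε = exp (ε L)`; the claim for `ε < 1` is
`1 - exp (-ε L) ≤ ε L ^ (1 - ε)`. Weighted AM-GM bounds the integrand of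
`1 - exp (-ε L) = ∫₀ᴸ ε exp (-ε u) du` by `ε (ε L ^ (1 - ε) exp (-u) + (1 - ε) L ^ (-ε))`,
whose integral is at most `ε² L ^ (1 - ε) + (1 - ε) ε L ^ (-ε) L = ε L ^ (1 - ε)`.
-/

open Real

theorem exp_neg_mul_le_weighted {ε L : ℝ} (hε0 : 0 ≤ ε) (hε1 : ε ≤ 1) (hL : 0 < L) (u : ℝ) :
    exp (-(ε * u)) ≤ ε * (L ^ (1 - ε) * exp (-u)) + (1 - ε) * L ^ (-ε) := by
  have hA : 0 ≤ L ^ (1 - ε) * exp (-u) := by positivity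
  have hgeom : (L ^ (1 - ε) * exp (-u)) ^ ε * (L ^ (-ε)) ^ (1 - ε) = exp (-(ε * u)) := by
    rw [mul_rpow (by positivity) (exp_nonneg _), ← rpow_mul hL.le, ← rpow_mul hL.le,
      ← exp_mul, mul_right_comm, ← rpow_add hL, show (1 - ε) * ε + -ε * (1 - ε) = 0 by ring,
      rpow_zero, one_mul, neg_mul, mul_comm]
  rw [← hgeom]
  exact geom_mean_le_arith_mean2_weighted hε0 (by linarith) hA (by positivity) (by ring)

theorem one_sub_exp_neg_mul_le {ε L : ℝ} (hε0 : 0 ≤ ε) (hε1 : ε ≤ 1) (hL : 0 ≤ L) :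
    1 - exp (-(ε * L)) ≤ ε * L ^ (1 - ε) := by
  rcases hL.eq_or_lt with rfl | hL
  · simp only [mul_zero, neg_zero, exp_zero, sub_self]
    positivity
  set A := L ^ (1 - ε)
  set B := L ^ (-ε)
  let F : ℝ → ℝ := fun u => ε * (ε * A * (1 - exp (-u)) + (1 - ε) * B * u) - (1 - exp (-(ε * u)))
  have hF : ∀ u, HasDerivAt F (ε * (ε * (A * exp (-u)) + (1 - ε) * B - exp (-(ε * u)))) u := by
    intro u
    have h1 := ((hasDerivAt_neg' u).exp.const_sub 1).const_mul (ε * A)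
    have h2 := ((hasDerivAt_id' u).const_mul ε).neg.exp.const_sub 1
    exact ((h1.add ((hasDerivAt_id' u).const_mul ((1 - ε) * B))).const_mul ε |>.sub h2).congr_deriv
      (by simp only [Pi.neg_apply]; ring)
  have hmono : Monotone F := monotone_of_deriv_nonneg (fun u => (hF u).differentiableAt)
    fun u => (hF u).deriv ▸ mul_nonneg hε0 (sub_nonneg.2 (exp_neg_mul_le_weighted hε0 hε1 hL u))
  have hFL : 0 ≤ F L := by simpa [F] using hmono hL.le
  have hBL : B * L = A := by
    rw [← rpow_add_one hL.ne', neg_add_eq_sub]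
  have hdecay : ε * A * (1 - exp (-L)) ≤ ε * A :=
    mul_le_of_le_one_right (by positivity) (by linarith [exp_pos (-L)])
  calc 1 - exp (-(ε * L)) ≤ ε * (ε * A * (1 - exp (-L)) + (1 - ε) * (B * L)) := by
        simp only [F] at hFL
        linarith
    _ ≤ ε * (ε * A + (1 - ε) * A) := by rw [hBL]; gcongr
    _ = ε * A := by ring

theorem rpow_sub_one_le_mul_log_rpow {t ε : ℝ} (ht : 1 ≤ t) (hε0 : 0 ≤ ε) (hε1 : ε ≤ 1) :
    t ^ ε - 1 ≤ ε * (t ^ ε * log t ^ (1 - ε)) := by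
  have hexp : t ^ ε = exp (ε * log t) := by rw [rpow_def_of_pos (by linarith), mul_comm]
  have hkey := mul_le_mul_of_nonneg_left
    (one_sub_exp_neg_mul_le hε0 hε1 (log_nonneg ht)) (exp_pos (ε * log t)).le
  rw [mul_sub, mul_one, ← exp_add, add_neg_cancel, exp_zero] at hkey
  rw [hexp]
  linarith

/-- for t ≥ 1 and 0 < ε ≤ 1,
(t^ε − 1)/ε ≤ t^ε·(ln t)^(1−ε) − ⌊ε⌋. -/
theorem stmt3 (t ε : ℝ) (ht : 1 ≤ t) (hε : 0 < ε) (hε1 : ε ≤ 1) :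
    (t ^ ε - 1) / ε ≤ t ^ ε * (Real.log t) ^ (1 - ε) - (⌊ε⌋ : ℝ) := by
  rcases hε1.eq_or_lt with rfl | hlt
  · norm_num
  · rw [Int.floor_eq_zero_iff.2 ⟨hε.le, hlt⟩, Int.cast_zero, sub_zero, div_le_iff₀ hε, mul_comm]
    exact rpow_sub_one_le_mul_log_rpow ht hε.le hε1
end

section
/- Let ε, α₁, α₂, β be real numbers with 0 < ε < 1, α₁ > 0, α₂ > 0, β > 0, and suppose α := α₁ + α₂ ≥ 2 + ε. Define g : [1, ∞) → ℝ by g(t) = t^ε − (α₁·(ln t / t)^(1−ε) + α₂·t^(−1)) − β, and set t₀ = ((1/ε)·α + β^(1/ε))·(ln((1/ε)·α + β^(1/ε)))^(1−ε). Then g(t₀) > 0. -/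
/-!
Write `α = ε u`, `v = β^(1/ε)`, `s = u + v`, `L = ln s` and `e = 1 - ε`, so `t₀ = s L^e`.
Then `t₀^ε = s P / s^e` with `P = L^(εe)`, and since `ln t₀ = L (1 + e ln L / L)`,
Bernoulli's inequality bounds both `(ln t₀ / t₀)^e` and `t₀⁻¹` by `P c / s^e`, where
`c = 1 + e² ln L / L`. Young's inequality gives `β s^e ≤ ε v + e s = s - α`. So
`s^e g(t₀) ≥ P (s - α c) - (s - α) = u (P (1 - ε c) - e) + v (P - 1)`, and
`P (1 - ε c) ≥ e` reduces, via `L^a ≥ 1 + a ln L`, to `L ≤ L^a (L - a ln L)` for `a = εe`;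
finally `P > 1` because `s > 3 > exp 1`.
-/

open Real

lemma le_rpow_mul_sub_mul_log {L a : ℝ} (hL : 1 ≤ L) (ha₀ : 0 ≤ a) (ha₁ : a ≤ 1) :
    L ≤ L ^ a * (L - a * log L) := by
  have hL₀ : 0 < L := by linarith
  have hlog₀ : 0 ≤ log L := log_nonneg hL
  have hy : a * log L ≤ L - 1 := by
    nlinarith [log_le_sub_one_of_pos hL₀]
  have hexp : 1 + a * log L ≤ L ^ a := by
    rw [rpow_def_of_pos hL₀, mul_comm a]
    linarith [add_one_le_exp (log L * a)]
  -- with y = a log L: L^a (L - y) - L ≥ (1 + y)(L - y) - L = y (L - 1 - y) ≥ 0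
  nlinarith [mul_nonneg (mul_nonneg ha₀ hlog₀) (sub_nonneg.2 hy)]

lemma one_sub_le_rpow_mul {L ε : ℝ} (hL : 1 ≤ L) (hε₀ : 0 ≤ ε) (hε₁ : ε ≤ 1) :
    1 - ε ≤ L ^ (ε * (1 - ε)) * (1 - ε * (1 + (1 - ε) ^ 2 * log L / L)) := by
  have hL₀ : 0 < L := by linarith
  have h := le_rpow_mul_sub_mul_log hL (mul_nonneg hε₀ (sub_nonneg.2 hε₁))
    (by nlinarith : ε * (1 - ε) ≤ 1)
  have hid : 1 - ε * (1 + (1 - ε) ^ 2 * log L / L) =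
      (1 - ε) * (L - ε * (1 - ε) * log L) / L := by
    field_simp; ring
  rw [hid, mul_div_assoc', le_div_iff₀ hL₀, mul_left_comm]
  exact mul_le_mul_of_nonneg_left h (sub_nonneg.2 hε₁)

lemma log_div_rpow_le {s ε : ℝ} (hs : exp 1 ≤ s) (hε₀ : 0 ≤ ε) (hε₁ : ε ≤ 1) :
    (log (s * log s ^ (1 - ε)) / (s * log s ^ (1 - ε))) ^ (1 - ε) ≤
      log s ^ (ε * (1 - ε)) * (1 + (1 - ε) ^ 2 * log (log s) / log s) / s ^ (1 - ε) := by
  have hs₀ : 0 < s := (exp_pos 1).trans_le hs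
  set L := log s
  have hL : 1 ≤ L := by rwa [le_log_iff_exp_le hs₀]
  have hL₀ : 0 < L := by linarith
  set e := 1 - ε with he
  set x := e * log L / L
  have hx : 0 ≤ x := div_nonneg (mul_nonneg (by linarith) (log_nonneg hL)) hL₀.le
  have hLε : L ^ ε * L ^ e = L := by
    rw [← rpow_add hL₀, he, add_sub_cancel, rpow_one]
  have hdiv : log (s * L ^ e) / (s * L ^ e) = (1 + x) * L ^ ε / s := by
    rw [log_mul hs₀.ne' (rpow_pos_of_pos hL₀ _).ne', log_rpow hL₀,
      div_eq_div_iff (by positivity) hs₀.ne']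
    have hLx : L * (1 + x) = L + e * log L := by simp only [x]; field_simp
    linear_combination s * hLx.symm - (1 + x) * s * hLε
  calc (log (s * L ^ e) / (s * L ^ e)) ^ e
      = (1 + x) ^ e * L ^ (ε * e) / s ^ e := by
        rw [hdiv, div_rpow (by positivity) hs₀.le, mul_rpow (by positivity) (by positivity),
          ← rpow_mul hL₀.le]
    _ ≤ (1 + e * x) * L ^ (ε * e) / s ^ e := by
        gcongr
        exact rpow_one_add_le_one_add_mul_self (by linarith) (by linarith) (by linarith)
    _ = L ^ (ε * e) * (1 + e ^ 2 * log L / L) / s ^ e := by ring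

lemma mul_rpow_one_sub_le {β s ε : ℝ} (hβ : 0 ≤ β) (hs : 0 ≤ s) (hε₀ : 0 < ε)
    (hε₁ : ε ≤ 1) :
    β * s ^ (1 - ε) ≤ ε * β ^ (1 / ε) + (1 - ε) * s := by
  have hβε : (β ^ (1 / ε)) ^ ε = β := by
    rw [← rpow_mul hβ, one_div_mul_cancel hε₀.ne', rpow_one]
  simpa only [hβε] using geom_mean_le_arith_mean2_weighted hε₀.le (sub_nonneg.2 hε₁)
    (rpow_nonneg hβ (1 / ε)) hs (add_sub_cancel ε 1)

lemma mul_rpow_rpow_eq {s L ε : ℝ} (hs : 0 < s) (hL : 0 ≤ L) :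
    (s * L ^ (1 - ε)) ^ ε = s * L ^ (ε * (1 - ε)) / s ^ (1 - ε) := by
  have hse : s ^ ε * s ^ (1 - ε) = s := by rw [← rpow_add hs, add_sub_cancel, rpow_one]
  rw [mul_rpow hs.le (rpow_nonneg hL _), ← rpow_mul hL, mul_comm (1 - ε) ε,
    eq_div_iff (by positivity)]
  linear_combination L ^ (ε * (1 - ε)) * hse

lemma inv_mul_rpow_le_div_rpow {s L e K : ℝ} (hs : 1 ≤ s) (hL : 1 ≤ L) (he₀ : 0 ≤ e)
    (he₁ : e ≤ 1) (hK : 1 ≤ K) : (s * L ^ e)⁻¹ ≤ K / s ^ e := by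
  have hse : s ^ e ≤ s * L ^ e :=
    (rpow_le_self_of_one_le hs he₁).trans
      (le_mul_of_one_le_right (by linarith) (one_le_rpow hL he₀))
  calc (s * L ^ e)⁻¹ ≤ (s ^ e)⁻¹ := inv_anti₀ (by positivity) hse
    _ ≤ K / s ^ e := by rw [inv_eq_one_div]; gcongr

/-- with 0 < ε < 1, α₁, α₂, β > 0, α = α₁ + α₂ ≥ 2 + ε,
g(t) = t^ε − (α₁·(ln t/t)^(1−ε) + α₂·t⁻¹) − β and
t₀ = ((1/ε)·α + β^(1/ε))·(ln((1/ε)·α + β^(1/ε)))^(1−ε) one has g(t₀) > 0. -/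
theorem stmt4 (ε α₁ α₂ β α t₀ : ℝ) (hε : 0 < ε) (hε1 : ε < 1)
    (hα₁ : 0 < α₁) (hα₂ : 0 < α₂) (hβ : 0 < β)
    (hα_def : α = α₁ + α₂) (hα_ge : 2 + ε ≤ α)
    (ht₀ : t₀ = ((1 / ε) * α + β ^ (1 / ε)) *
      (Real.log ((1 / ε) * α + β ^ (1 / ε))) ^ (1 - ε)) :
    0 < t₀ ^ ε - (α₁ * (Real.log t₀ / t₀) ^ (1 - ε) + α₂ * t₀⁻¹) - β := by
  subst ht₀
  set u := 1 / ε * α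
  set v := β ^ (1 / ε)
  set s := u + v
  set L := log s
  set e := 1 - ε
  set P := L ^ (ε * e)
  set c := 1 + e ^ 2 * log L / L
  have hαu : α = ε * u := by simp only [u]; field_simp
  have hu : 3 < u := by nlinarith
  have hv : 0 < v := rpow_pos_of_pos hβ _
  have hs : exp 1 < s := by linarith [exp_one_lt_d9]
  have hs₀ : 0 < s := by linarith [exp_pos 1]
  have hL : 1 < L := (lt_log_iff_exp_lt hs₀).2 hs
  have hL₀ : 0 ≤ L := by linarith
  have hP : 1 < P := one_lt_rpow hL (mul_pos hε (by linarith))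
  have hc : 1 ≤ c :=
    le_add_of_nonneg_right (div_nonneg (mul_nonneg (sq_nonneg e) (log_nonneg hL.le)) hL₀)
  have h₁ : (log (s * L ^ e) / (s * L ^ e)) ^ e ≤ P * c / s ^ e :=
    log_div_rpow_le hs.le hε.le hε1.le
  have h₂ : (s * L ^ e)⁻¹ ≤ P * c / s ^ e :=
    inv_mul_rpow_le_div_rpow (by linarith) hL.le (by linarith) (by linarith) (by nlinarith)
  have h₃ : β ≤ (s - α) / s ^ e := by
    rw [le_div_iff₀ (by positivity)]
    refine (mul_rpow_one_sub_le hβ.le hs₀.le hε hε1.le).trans_eq ?_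
    rw [hαu]; ring
  have hgap : s - α < P * (s - α * c) := by
    have := one_sub_le_rpow_mul hL.le hε.le hε1.le
    rw [hαu]; nlinarith
  rw [mul_rpow_rpow_eq hs₀ hL₀]
  calc (0 : ℝ) < (P * (s - α * c) - (s - α)) / s ^ e := div_pos (by linarith) (by positivity)
    _ = s * P / s ^ e - (α₁ * (P * c / s ^ e) + α₂ * (P * c / s ^ e)) - (s - α) / s ^ e := by
      rw [hα_def]; ring
    _ ≤ _ := by gcongr
end

section
/- Let a : ℕ → E be a perceptron update sequence. Then for every t ∈ ℕ one has ‖a_t‖ ≥ ⟨a_t, u⟩ ≥ γ_d·t. -/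
open scoped RealInnerProductSpace

theorem mul_le_of_add_le_succ {s : ℕ → ℝ} {γ : ℝ} (h0 : s 0 = 0)
    (hstep : ∀ t, s t + γ ≤ s (t + 1)) (t : ℕ) : γ * t ≤ s t := by
  induction t with
  | zero => simp [h0]
  | succ t ih =>
    push_cast
    linarith [hstep t]

theorem mul_le_inner_of_forall_exists_add {ι E : Type*} [NormedAddCommGroup E]
    [InnerProductSpace ℝ E] (y : ι → E) (u : E) (γ : ℝ) (hmargin : ∀ k, γ ≤ ⟪u, y k⟫)
    (a : ℕ → E) (ha0 : a 0 = 0) (hupd : ∀ t, ∃ k, a (t + 1) = a t + y k) (t : ℕ) :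
    γ * t ≤ ⟪a t, u⟫ := by
  refine mul_le_of_add_le_succ (s := fun t ↦ ⟪a t, u⟫) (by rw [ha0, inner_zero_left])
    (fun t ↦ ?_) t
  obtain ⟨k, hk⟩ := hupd t
  rw [hk, inner_add_left, real_inner_comm u (y k)]
  linarith [hmargin k]

theorem stmt5_general {E : Type*} [NormedAddCommGroup E] [InnerProductSpace ℝ E]
    {n : ℕ} (y : Fin n → E)
    (u : E) (hu : ‖u‖ = 1) (γd : ℝ)
    (hmargin : ∀ k : Fin n, γd ≤ ⟪u, y k⟫)
    (a : ℕ → E) (ha0 : a 0 = 0)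
    (hupd : ∀ t : ℕ, ∃ k : Fin n, a (t + 1) = a t + y k) :
    ∀ t : ℕ, γd * t ≤ ⟪a t, u⟫ ∧ ⟪a t, u⟫ ≤ ‖a t‖ := by
  intro t
  refine ⟨mul_le_inner_of_forall_exists_add y u γd hmargin a ha0 hupd t, ?_⟩
  simpa [hu] using real_inner_le_norm (a t) u

/-- for a perceptron update sequence, ‖a_t‖ ≥ ⟨a_t, u⟩ ≥ γ_d·t. -/
theorem stmt5 {E : Type*} [NormedAddCommGroup E] [InnerProductSpace ℝ E]
    {n : ℕ} (hn : 0 < n) (y : Fin n → E)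
    (u : E) (hu : ‖u‖ = 1) (γd : ℝ) (hγd : 0 < γd)
    (hmargin : ∀ k : Fin n, γd ≤ ⟪u, y k⟫)
    (a : ℕ → E) (ha0 : a 0 = 0)
    (hupd : ∀ t : ℕ, ∃ k : Fin n, a (t + 1) = a t + y k) :
    ∀ t : ℕ, γd * t ≤ ⟪a t, u⟫ ∧ ⟪a t, u⟫ ≤ ‖a t‖ :=
  stmt5_general y u hu γd hmargin a ha0 hupd
end

section
/- Let 0 < ε ≤ 1, b > 0, and let a : ℕ → E be a t-margitron run of length T. Then for every t ≤ T it holds that ‖a_t‖² ≤ R²·t + (2/(2−ε))·b·t^(2−ε). -/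
/-!
Each update adds `‖y_k‖² ≤ R²` plus `2⟪a_t, y_k⟫ ≤ 2 b t^(1-ε)` to `‖a_t‖²`. The thresholds sum
like an integral: by Bernoulli's inequality `t^p + p t^(p-1) ≤ (t+1)^p` for `p = 2 - ε ≥ 1`, so
`2 / (2 - ε) · b · t^(2-ε)` grows by at least `2 b t^(1-ε)` per round, and induction on `t` closes.
-/

open scoped RealInnerProductSpace

lemma rpow_add_mul_rpow_sub_one_le_add_one_rpow {x p : ℝ} (hx : 0 < x) (hp : 1 ≤ p) :
    x ^ p + p * x ^ (p - 1) ≤ (x + 1) ^ p := by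
  have bernoulli : 1 + p * x⁻¹ ≤ (1 + x⁻¹) ^ p :=
    one_add_mul_self_le_rpow_one_add (by linarith [inv_pos.2 hx]) hp
  calc x ^ p + p * x ^ (p - 1) = x ^ p * (1 + p * x⁻¹) := by
        rw [Real.rpow_sub_one hx.ne']; field_simp
    _ ≤ x ^ p * (1 + x⁻¹) ^ p := by gcongr
    _ = (x + 1) ^ p := by
        rw [← Real.mul_rpow hx.le (by positivity)]; field_simp

lemma mul_rpow_add_two_mul_threshold_le {ε b : ℝ} (hε1 : ε ≤ 1) (hb : 0 ≤ b) (t : ℕ) :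
    2 / (2 - ε) * b * (t : ℝ) ^ (2 - ε) + 2 * (if t = 0 then 0 else b * (t : ℝ) ^ (1 - ε)) ≤
      2 / (2 - ε) * b * ((t : ℝ) + 1) ^ (2 - ε) := by
  have hε2 : 0 < 2 - ε := by linarith
  rcases Nat.eq_zero_or_pos t with rfl | ht
  · simp only [if_true, Nat.cast_zero, Real.zero_rpow hε2.ne', zero_add, Real.one_rpow,
      mul_zero, add_zero, mul_one]
    positivity
  · have tangent := rpow_add_mul_rpow_sub_one_le_add_one_rpow (Nat.cast_pos.2 ht)
      (show 1 ≤ 2 - ε by linarith)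
    rw [show 2 - ε - 1 = 1 - ε by ring] at tangent
    calc 2 / (2 - ε) * b * (t : ℝ) ^ (2 - ε) + 2 * (if t = 0 then 0 else b * (t : ℝ) ^ (1 - ε))
        = 2 / (2 - ε) * b * ((t : ℝ) ^ (2 - ε) + (2 - ε) * (t : ℝ) ^ (1 - ε)) := by
          rw [if_neg ht.ne']; field_simp
      _ ≤ 2 / (2 - ε) * b * ((t : ℝ) + 1) ^ (2 - ε) := by gcongr

theorem stmt6_general {E : Type*} [NormedAddCommGroup E] [InnerProductSpace ℝ E]
    {n : ℕ} (y : Fin n → E)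
    (R : ℝ) (hR : IsGreatest (Set.range (fun k : Fin n => ‖y k‖)) R)
    (ε b : ℝ) (hε1 : ε ≤ 1) (hb : 0 < b)
    (T : ℕ) (a : ℕ → E) (ha0 : a 0 = 0)
    (hrun : ∀ t : ℕ, t < T → ∃ k : Fin n, a (t + 1) = a t + y k ∧
      ⟪a t, y k⟫ ≤ if t = 0 then 0 else b * (t : ℝ) ^ (1 - ε)) :
    ∀ t : ℕ, t ≤ T →
      ‖a t‖ ^ 2 ≤ R ^ 2 * t + (2 / (2 - ε)) * b * (t : ℝ) ^ (2 - ε) := by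
  intro t ht
  induction t with
  | zero => simp [ha0, Real.zero_rpow (show 2 - ε ≠ 0 by linarith)]
  | succ t ih =>
    obtain ⟨k, hstep, hmisclassified⟩ := hrun t ht
    have hyk : ‖y k‖ ^ 2 ≤ R ^ 2 := pow_le_pow_left₀ (norm_nonneg _) (hR.2 ⟨k, rfl⟩) 2
    calc ‖a (t + 1)‖ ^ 2 = ‖a t‖ ^ 2 + 2 * ⟪a t, y k⟫ + ‖y k‖ ^ 2 := by
          rw [hstep, norm_add_sq_real]
      _ ≤ R ^ 2 * t + 2 / (2 - ε) * b * (t : ℝ) ^ (2 - ε) +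
            2 * (if t = 0 then 0 else b * (t : ℝ) ^ (1 - ε)) + R ^ 2 := by
          gcongr; exact ih (by omega)
      _ ≤ R ^ 2 * ↑(t + 1) + 2 / (2 - ε) * b * (↑(t + 1) : ℝ) ^ (2 - ε) := by
          push_cast
          linarith [mul_rpow_add_two_mul_threshold_le hε1 hb.le t]

/-- for a t-margitron run of length T with 0 < ε ≤ 1, b > 0,
‖a_t‖² ≤ R²·t + (2/(2−ε))·b·t^(2−ε) for all t ≤ T. -/
theorem stmt6 {E : Type*} [NormedAddCommGroup E] [InnerProductSpace ℝ E]
    {n : ℕ} (hn : 0 < n) (y : Fin n → E)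
    (R : ℝ) (hR : IsGreatest (Set.range (fun k : Fin n => ‖y k‖)) R)
    (u : E) (hu : ‖u‖ = 1) (γd : ℝ) (hγd : 0 < γd)
    (hmargin : ∀ k : Fin n, γd ≤ ⟪u, y k⟫)
    (ε b : ℝ) (hε : 0 < ε) (hε1 : ε ≤ 1) (hb : 0 < b)
    (T : ℕ) (a : ℕ → E) (ha0 : a 0 = 0)
    (hrun : ∀ t : ℕ, t < T → ∃ k : Fin n, a (t + 1) = a t + y k ∧
      ⟪a t, y k⟫ ≤ if t = 0 then 0 else b * (t : ℝ) ^ (1 - ε)) :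
    ∀ t : ℕ, t ≤ T →
      ‖a t‖ ^ 2 ≤ R ^ 2 * t + (2 / (2 - ε)) * b * (t : ℝ) ^ (2 - ε) :=
  stmt6_general y R hR ε b hε1 hb T a ha0 hrun
end

section
/- Let 0 < ε ≤ 1, b > 0, and let a : ℕ → E be a t-margitron run of length T. Then T ≤ (1/ε)·R²/γ_d² + ((2/(2−ε))·b/γ_d²)^(1/ε). -/
/-!
Perceptron-style argument. Each update adds a pattern with margin at least `γ_d` along `u`, so
`T γ_d ≤ ⟪u, a_T⟫ ≤ ‖a_T‖`. Each update also happens on a misclassified pattern, so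
`‖a_{t+1}‖² ≤ ‖a_t‖² + R² + 2 b t^(1-ε)`, and comparing `∑_{t<T} t^(1-ε)` with an integral gives
`T² γ_d² ≤ T R² + (2b/(2-ε)) T^(2-ε)`. Dividing by `T γ_d²` leaves `T ≤ A + B T^(1-ε)`, and
weighted AM-GM (`B T^(1-ε) ≤ (1-ε) T + ε B^(1/ε)`) turns this into `T ≤ A/ε + B^(1/ε)`.
-/

open scoped RealInnerProductSpace

open Finset

theorem sum_range_rpow_le {r : ℝ} (hr : 0 ≤ r) (N : ℕ) :
    ∑ i ∈ range N, (i : ℝ) ^ r ≤ (N : ℝ) ^ (r + 1) / (r + 1) := by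
  have hmono : MonotoneOn (fun x : ℝ => x ^ r) (Set.Icc 0 (0 + N)) :=
    (Real.monotoneOn_rpow_Ici_of_exponent_nonneg hr).mono Set.Icc_subset_Ici_self
  calc ∑ i ∈ range N, (i : ℝ) ^ r ≤ ∫ x in (0 : ℝ)..0 + N, x ^ r := by
        simpa using hmono.sum_le_integral
    _ = (N : ℝ) ^ (r + 1) / (r + 1) := by
        rw [zero_add, integral_rpow (.inl (by linarith)), Real.zero_rpow (by linarith), sub_zero]

theorem le_div_sq_add_mul_rpow_of_mul_sq_le {x γ A C r : ℝ} (hx : 0 ≤ x) (hγ : 0 < γ)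
    (hA : 0 ≤ A) (hC : 0 ≤ C) (h : (x * γ) ^ 2 ≤ x * A + C * x ^ (r + 1)) :
    x ≤ A / γ ^ 2 + C / γ ^ 2 * x ^ r := by
  rcases hx.eq_or_lt with rfl | hx
  · positivity
  have hlin : x * γ ^ 2 ≤ A + C * x ^ r := by
    refine le_of_mul_le_mul_left ?_ hx
    calc x * (x * γ ^ 2) = (x * γ) ^ 2 := by ring
      _ ≤ x * A + C * x ^ (r + 1) := h
      _ = x * (A + C * x ^ r) := by rw [Real.rpow_add_one hx.ne']; ring
  rw [div_mul_eq_mul_div, ← add_div, le_div_iff₀ (by positivity)]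
  exact hlin

theorem le_one_div_mul_add_rpow_of_le_add_mul_rpow {x A B ε : ℝ} (hx : 0 ≤ x) (hB : 0 ≤ B)
    (hε : 0 < ε) (hε1 : ε ≤ 1) (h : x ≤ A + B * x ^ (1 - ε)) :
    x ≤ 1 / ε * A + B ^ (1 / ε) := by
  have hamgm : x ^ (1 - ε) * B ≤ (1 - ε) * x + ε * B ^ (1 / ε) := by
    have := Real.geom_mean_le_arith_mean2_weighted (sub_nonneg.2 hε1) hε.le hx
      (Real.rpow_nonneg hB (1 / ε)) (sub_add_cancel 1 ε)
    rwa [← Real.rpow_mul hB, one_div_mul_cancel hε.ne', Real.rpow_one] at this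
  have : ε * x ≤ A + ε * B ^ (1 / ε) := by nlinarith
  rw [one_div_mul_eq_div, ← sub_le_iff_le_add, le_div_iff₀ hε]
  linarith

section Increments

variable {E : Type*} [NormedAddCommGroup E] [InnerProductSpace ℝ E] {a : ℕ → E} {T : ℕ}

theorem mul_le_inner_of_forall_le_inner_sub {u : E} {γ : ℝ} (ha0 : a 0 = 0)
    (h : ∀ t < T, γ ≤ ⟪u, a (t + 1) - a t⟫) : T * γ ≤ ⟪u, a T⟫ := by
  have := card_nsmul_le_sum (range T) (fun t => ⟪u, a (t + 1) - a t⟫) γ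
    (fun t ht => h t (mem_range.1 ht))
  rwa [card_range, nsmul_eq_mul, ← inner_sum, sum_range_sub, ha0, sub_zero] at this

theorem norm_sq_le_sum_of_forall {c : ℕ → ℝ} (ha0 : a 0 = 0)
    (h : ∀ t < T, 2 * ⟪a t, a (t + 1) - a t⟫ + ‖a (t + 1) - a t‖ ^ 2 ≤ c t) :
    ‖a T‖ ^ 2 ≤ ∑ t ∈ range T, c t := by
  induction T with
  | zero => simp [ha0]
  | succ T ih =>
    rw [sum_range_succ]
    calc ‖a (T + 1)‖ ^ 2
        = ‖a T‖ ^ 2 + (2 * ⟪a T, a (T + 1) - a T⟫ + ‖a (T + 1) - a T‖ ^ 2) := by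
          rw [← add_assoc, ← norm_add_sq_real, add_sub_cancel]
      _ ≤ _ := add_le_add (ih fun t ht => h t (ht.trans T.lt_succ_self)) (h T T.lt_succ_self)

end Increments

theorem stmt7_general {E : Type*} [NormedAddCommGroup E] [InnerProductSpace ℝ E]
    {n : ℕ} (y : Fin n → E)
    (R : ℝ) (hR : IsGreatest (Set.range (fun k : Fin n => ‖y k‖)) R)
    (u : E) (hu : ‖u‖ = 1) (γd : ℝ) (hγd : 0 < γd)
    (hmargin : ∀ k : Fin n, γd ≤ ⟪u, y k⟫)
    (ε b : ℝ) (hε : 0 < ε) (hε1 : ε ≤ 1) (hb : 0 < b)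
    (T : ℕ) (a : ℕ → E) (ha0 : a 0 = 0)
    (hrun : ∀ t : ℕ, t < T → ∃ k : Fin n, a (t + 1) = a t + y k ∧
      ⟪a t, y k⟫ ≤ if t = 0 then 0 else b * (t : ℝ) ^ (1 - ε)) :
    (T : ℝ) ≤ (1 / ε) * (R ^ 2 / γd ^ 2) + ((2 / (2 - ε)) * b / γd ^ 2) ^ (1 / ε) := by
  have h2ε : 0 < 2 - ε := by linarith
  have hlow : T * γd ≤ ‖a T‖ := by
    refine (mul_le_inner_of_forall_le_inner_sub ha0 fun t ht => ?_).trans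
      ((real_inner_le_norm u (a T)).trans_eq (by rw [hu, one_mul]))
    obtain ⟨k, hk, -⟩ := hrun t ht
    rw [hk, add_sub_cancel_left]
    exact hmargin k
  have hup : ‖a T‖ ^ 2 ≤ ∑ t ∈ range T, (R ^ 2 + 2 * b * (t : ℝ) ^ (1 - ε)) := by
    refine norm_sq_le_sum_of_forall ha0 fun t ht => ?_
    obtain ⟨k, hk, hmis⟩ := hrun t ht
    rw [hk, add_sub_cancel_left]
    have hyk : ‖y k‖ ^ 2 ≤ R ^ 2 := pow_le_pow_left₀ (norm_nonneg _) (hR.2 ⟨k, rfl⟩) 2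
    have hthr : (if t = 0 then 0 else b * (t : ℝ) ^ (1 - ε)) ≤ b * (t : ℝ) ^ (1 - ε) := by
      split_ifs
      exacts [by positivity, le_rfl]
    linarith
  have hsum : ∑ t ∈ range T, (R ^ 2 + 2 * b * (t : ℝ) ^ (1 - ε))
      ≤ T * R ^ 2 + 2 / (2 - ε) * b * (T : ℝ) ^ (1 - ε + 1) := by
    calc _ = T * R ^ 2 + 2 * b * ∑ t ∈ range T, (t : ℝ) ^ (1 - ε) := by
          rw [sum_add_distrib, sum_const, card_range, nsmul_eq_mul, mul_sum]
      _ ≤ T * R ^ 2 + 2 * b * ((T : ℝ) ^ (1 - ε + 1) / (1 - ε + 1)) := by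
          gcongr
          exact sum_range_rpow_le (sub_nonneg.2 hε1) T
      _ = _ := by ring
  have hkey := le_div_sq_add_mul_rpow_of_mul_sq_le T.cast_nonneg hγd (sq_nonneg R)
    (by positivity) ((pow_le_pow_left₀ (by positivity) hlow 2).trans (hup.trans hsum))
  exact le_one_div_mul_add_rpow_of_le_add_mul_rpow T.cast_nonneg (by positivity) hε hε1 hkey

/-- a t-margitron run of length T with 0 < ε ≤ 1, b > 0 satisfies
T ≤ (1/ε)·R²/γ_d² + ((2/(2−ε))·b/γ_d²)^(1/ε). -/
theorem stmt7 {E : Type*} [NormedAddCommGroup E] [InnerProductSpace ℝ E]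
    {n : ℕ} (hn : 0 < n) (y : Fin n → E)
    (R : ℝ) (hR : IsGreatest (Set.range (fun k : Fin n => ‖y k‖)) R)
    (u : E) (hu : ‖u‖ = 1) (γd : ℝ) (hγd : 0 < γd)
    (hmargin : ∀ k : Fin n, γd ≤ ⟪u, y k⟫)
    (ε b : ℝ) (hε : 0 < ε) (hε1 : ε ≤ 1) (hb : 0 < b)
    (T : ℕ) (a : ℕ → E) (ha0 : a 0 = 0)
    (hrun : ∀ t : ℕ, t < T → ∃ k : Fin n, a (t + 1) = a t + y k ∧
      ⟪a t, y k⟫ ≤ if t = 0 then 0 else b * (t : ℝ) ^ (1 - ε)) :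
    (T : ℝ) ≤ (1 / ε) * (R ^ 2 / γd ^ 2) + ((2 / (2 - ε)) * b / γd ^ 2) ^ (1 / ε) :=
  stmt7_general y R hR u hu γd hγd hmargin ε b hε hε1 hb T a ha0 hrun
end

section
/- Let 0 < ε ≤ 1, b > 0, and let a : ℕ → E be a t-margitron run of length t_c ≥ 1 that has converged after t_c updates, i.e. ⟨a_{t_c}, y_k⟩ > b·t_c^(1−ε) for every k ∈ {1, …, n}. Then a_{t_c} ≠ 0 and the achieved directional margin γ'_d := min_k ⟨a_{t_c}/‖a_{t_c}‖, y_k⟩ satisfies γ'_d/γ_d ≥ (R²/b + 2/(2−ε))^(−1). -/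
open scoped RealInnerProductSpace

/-!
Perceptron-style argument. Each update adds some `y k`, so `⟪u, a t⟫` grows by at least `γ_d` per
step and `‖a_t‖ ≥ γ_d t`. Since updates happen only on misclassified patterns,
`‖a_{t+1}‖² ≤ ‖a_t‖² + R² + 2 b t^(1-ε)`, and the tangent-line bound for the convex function
`x ↦ x^(2-ε)` sums this to `‖a_t‖² ≤ (R² + 2b/(2-ε)) t^(2-ε)`. At convergence every
`⟪a, y_k⟫ > b t^(1-ε)`, so the normalized margin is at least `b t^(1-ε) / ‖a‖`; dividing by
`γ_d ≤ ‖a‖ / t` and using the bound on `‖a‖²` gives the claim.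
-/

theorem Real.rpow_add_mul_rpow_sub_one_le {x p : ℝ} (hx : 0 ≤ x) (hp : 1 ≤ p) :
    x ^ p + p * x ^ (p - 1) ≤ (x + 1) ^ p := by
  rcases hx.eq_or_lt with rfl | hx
  · -- `0 ^ 0 = 1` makes the case `p = 1` tight
    rcases hp.eq_or_lt with rfl | hp
    · norm_num
    · simp [Real.zero_rpow (by linarith : p ≠ 0), Real.zero_rpow (by linarith : p - 1 ≠ 0)]
  · have hbern : 1 + p * x⁻¹ ≤ (1 + x⁻¹) ^ p :=
      one_add_mul_self_le_rpow_one_add (by linarith [inv_pos.2 hx]) hp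
    calc x ^ p + p * x ^ (p - 1) = x ^ p * (1 + p * x⁻¹) := by
          rw [Real.rpow_sub_one hx.ne']; ring
      _ ≤ x ^ p * (1 + x⁻¹) ^ p := by gcongr
      _ = (x + 1) ^ p := by
          rw [← Real.mul_rpow hx.le (by positivity), mul_add, mul_inv_cancel₀ hx.ne', mul_one]

theorem div_le_div_of_mul_le_of_sq_le_rpow {T N γ b C m p : ℝ} (hT : 0 < T) (hN : 0 < N)
    (hγ : 0 < γ) (hb : 0 ≤ b) (hC : 0 < C) (hγN : γ * T ≤ N) (hN2 : N ^ 2 ≤ C * T ^ p)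
    (hm : b * T ^ (p - 1) / N ≤ m) : b / C ≤ m / γ := by
  rw [div_le_iff₀ hN] at hm
  have hm0 : 0 ≤ m := nonneg_of_mul_nonneg_left (hm.trans' (by positivity)) hN
  have hTp : 0 < T ^ p := Real.rpow_pos_of_pos hT p
  rw [div_le_div_iff₀ hC hγ]
  refine le_of_mul_le_mul_right ?_ hTp
  calc b * γ * T ^ p = b * T ^ (p - 1) * (γ * T) := by
        rw [Real.rpow_sub_one hT.ne']; field_simp
    _ ≤ m * N * N := mul_le_mul hm hγN (by positivity) (by positivity)
    _ = m * N ^ 2 := by ring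
    _ ≤ m * C * T ^ p := by rw [mul_assoc]; gcongr

section InnerProductSpace

variable {E : Type*} [NormedAddCommGroup E] [InnerProductSpace ℝ E]

theorem div_norm_le_inner_inv_norm_smul {x y : E} {c : ℝ} (h : c ≤ ⟪x, y⟫) :
    c / ‖x‖ ≤ ⟪‖x‖⁻¹ • x, y⟫ := by
  rw [real_inner_smul_left, div_eq_inv_mul]
  exact mul_le_mul_of_nonneg_left h (by positivity)

variable {ι : Type*} {y : ι → E} {a : ℕ → E} {T : ℕ}

theorem mul_le_inner_of_forall_exists_eq_add {u : E} {γ : ℝ} (hγ : ∀ k, γ ≤ ⟪u, y k⟫)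
    (h0 : a 0 = 0) (hrun : ∀ t < T, ∃ k, a (t + 1) = a t + y k) : γ * T ≤ ⟪u, a T⟫ := by
  induction T with
  | zero => simp [h0]
  | succ T ih =>
    obtain ⟨k, hk⟩ := hrun T T.lt_succ_self
    rw [hk, inner_add_right]
    push_cast
    linarith [hγ k, ih fun t ht => hrun t (ht.trans T.lt_succ_self)]

theorem norm_sq_le_of_forall_exists_eq_add {R b p : ℝ} (hy : ∀ k, ‖y k‖ ≤ R) (hb : 0 ≤ b)
    (hp : 1 ≤ p) (h0 : a 0 = 0)
    (hrun : ∀ t < T, ∃ k, a (t + 1) = a t + y k ∧ ⟪a t, y k⟫ ≤ b * (t : ℝ) ^ (p - 1)) :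
    ‖a T‖ ^ 2 ≤ R ^ 2 * T + 2 * b / p * (T : ℝ) ^ p := by
  induction T with
  | zero => simp [h0, Real.zero_rpow (by linarith : p ≠ 0)]
  | succ T ih =>
    obtain ⟨k, hk, hmis⟩ := hrun T T.lt_succ_self
    have ih := ih fun t ht => hrun t (ht.trans T.lt_succ_self)
    have hyk : ‖y k‖ ^ 2 ≤ R ^ 2 := pow_le_pow_left₀ (norm_nonneg _) (hy k) 2
    have hgrowth : 2 * b / p * (T : ℝ) ^ p + 2 * (b * (T : ℝ) ^ (p - 1)) ≤
        2 * b / p * ((T : ℝ) + 1) ^ p :=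
      calc 2 * b / p * (T : ℝ) ^ p + 2 * (b * (T : ℝ) ^ (p - 1))
          = 2 * b / p * ((T : ℝ) ^ p + p * (T : ℝ) ^ (p - 1)) := by
            field_simp [(by linarith : p ≠ 0)]
        _ ≤ 2 * b / p * ((T : ℝ) + 1) ^ p := by
            gcongr
            exact Real.rpow_add_mul_rpow_sub_one_le T.cast_nonneg hp
    rw [hk, norm_add_sq_real]
    push_cast
    linarith

end InnerProductSpace

theorem stmt8_general {E : Type*} [NormedAddCommGroup E] [InnerProductSpace ℝ E]
    {n : ℕ} (hn : 0 < n) (y : Fin n → E)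
    (R : ℝ) (hR : IsGreatest (Set.range (fun k : Fin n => ‖y k‖)) R)
    (u : E) (hu : ‖u‖ = 1) (γd : ℝ) (hγd : 0 < γd)
    (hmargin : ∀ k : Fin n, γd ≤ ⟪u, y k⟫)
    (ε b : ℝ) (hε1 : ε ≤ 1) (hb : 0 < b)
    (tc : ℕ) (a : ℕ → E) (ha0 : a 0 = 0)
    (hrun : ∀ t : ℕ, t < tc → ∃ k : Fin n, a (t + 1) = a t + y k ∧
      ⟪a t, y k⟫ ≤ if t = 0 then 0 else b * (t : ℝ) ^ (1 - ε))
    (hconv : ∀ k : Fin n, b * (tc : ℝ) ^ (1 - ε) < ⟪a tc, y k⟫) :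
    a tc ≠ 0 ∧
    (Finset.univ.inf' (Finset.univ_nonempty_iff.mpr ⟨⟨0, hn⟩⟩)
        (fun k : Fin n => ⟪(‖a tc‖)⁻¹ • a tc, y k⟫)) / γd ≥
      (R ^ 2 / b + 2 / (2 - ε))⁻¹ := by
  have hp : (2 - ε) - 1 = 1 - ε := by ring
  have hp0 : 0 < 2 - ε := by linarith
  have hstep : ∀ t < tc, ∃ k, a (t + 1) = a t + y k ∧
      ⟪a t, y k⟫ ≤ b * (t : ℝ) ^ ((2 - ε) - 1) := by
    refine fun t ht => (hrun t ht).imp fun k ⟨hk, hmis⟩ => ⟨hk, ?_⟩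
    rw [hp]
    split_ifs at hmis
    · exact hmis.trans (by positivity)
    · exact hmis
  have hA : a tc ≠ 0 := by
    intro h
    have := (hconv ⟨0, hn⟩).trans_le' (by positivity)
    simp [h] at this
  have htc : (1 : ℝ) ≤ tc :=
    Nat.one_le_cast.2 (Nat.one_le_iff_ne_zero.2 (by rintro rfl; exact hA ha0))
  have hγN : γd * tc ≤ ‖a tc‖ := by
    refine (mul_le_inner_of_forall_exists_eq_add hmargin ha0 fun t ht => ?_).trans ?_
    · exact (hstep t ht).imp fun _ => And.left
    · simpa [hu] using real_inner_le_norm u (a tc)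
  have hN2 : ‖a tc‖ ^ 2 ≤ (R ^ 2 + 2 * b / (2 - ε)) * (tc : ℝ) ^ (2 - ε) := by
    have := Real.self_le_rpow_of_one_le htc (by linarith : (1 : ℝ) ≤ 2 - ε)
    nlinarith [norm_sq_le_of_forall_exists_eq_add (fun k => hR.2 ⟨k, rfl⟩) hb.le
      (by linarith) ha0 hstep]
  refine ⟨hA, ?_⟩
  rw [ge_iff_le, show (R ^ 2 / b + 2 / (2 - ε))⁻¹ = b / (R ^ 2 + 2 * b / (2 - ε)) by field_simp]
  have hC : 0 < R ^ 2 + 2 * b / (2 - ε) := add_pos_of_nonneg_of_pos (sq_nonneg R) (by positivity)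
  refine div_le_div_of_mul_le_of_sq_le_rpow (by linarith) (norm_pos_iff.2 hA) hγd hb.le hC
    hγN hN2 ?_
  rw [hp]
  exact Finset.le_inf' _ _ fun k _ => div_norm_le_inner_inv_norm_smul (hconv k).le

/-- a converged t-margitron run with 0 < ε ≤ 1 achieves
γ'_d/γ_d ≥ (R²/b + 2/(2−ε))⁻¹, and a_{t_c} ≠ 0. -/
theorem stmt8 {E : Type*} [NormedAddCommGroup E] [InnerProductSpace ℝ E]
    {n : ℕ} (hn : 0 < n) (y : Fin n → E)
    (R : ℝ) (hR : IsGreatest (Set.range (fun k : Fin n => ‖y k‖)) R)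
    (u : E) (hu : ‖u‖ = 1) (γd : ℝ) (hγd : 0 < γd)
    (hmargin : ∀ k : Fin n, γd ≤ ⟪u, y k⟫)
    (ε b : ℝ) (hε : 0 < ε) (hε1 : ε ≤ 1) (hb : 0 < b)
    (tc : ℕ) (htc : 1 ≤ tc) (a : ℕ → E) (ha0 : a 0 = 0)
    (hrun : ∀ t : ℕ, t < tc → ∃ k : Fin n, a (t + 1) = a t + y k ∧
      ⟪a t, y k⟫ ≤ if t = 0 then 0 else b * (t : ℝ) ^ (1 - ε))
    (hconv : ∀ k : Fin n, b * (tc : ℝ) ^ (1 - ε) < ⟪a tc, y k⟫) :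
    a tc ≠ 0 ∧
    (Finset.univ.inf' (Finset.univ_nonempty_iff.mpr ⟨⟨0, hn⟩⟩)
        (fun k : Fin n => ⟪(‖a tc‖)⁻¹ • a tc, y k⟫)) / γd ≥
      (R ^ 2 / b + 2 / (2 - ε))⁻¹ :=
  stmt8_general hn y R hR u hu γd hγd hmargin ε b hε1 hb tc a ha0 hrun hconv
end

section
/- Let 0 < ε ≤ 1, b > 0, and let a : ℕ → E be a t-margitron run of length t_c ≥ 1 that has converged after t_c updates, i.e. ⟨a_{t_c}, y_k⟩ > b·t_c^(1−ε) for every k ∈ {1, …, n}. Then the achieved directional margin γ'_d := min_k ⟨a_{t_c}/‖a_{t_c}‖, y_k⟩ satisfies the after-running estimate γ'_d/γ_d ≥ ((R²/b)·t_c^(ε−1) + 2/(2−ε))^(−1). -/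
/-!
Along the run, the projection of `a t` on `u` grows by at least `γ_d` per update, so
`‖a t_c‖ ≥ γ_d t_c`. Each misclassified update increases `‖a‖²` by at most
`R² + 2 b s^(1-ε)`, and comparing `∑ s^(1-ε)` with `∫ x^(1-ε)` gives
`‖a t_c‖² ≤ R² t_c + 2 b t_c^(2-ε) / (2-ε)`. Convergence gives
`γ'_d ≥ b t_c^(1-ε) / ‖a t_c‖`, and these three bounds combine to the estimate.
-/

open scoped RealInnerProductSpace
open Finset

theorem sum_range_rpow_le_s9 {p : ℝ} (hp : 0 ≤ p) (t : ℕ) :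
    ∑ s ∈ range t, (s : ℝ) ^ p ≤ (t : ℝ) ^ (p + 1) / (p + 1) := by
  have hmono : MonotoneOn (fun x : ℝ => x ^ p) (Set.Icc 0 (0 + t)) :=
    (Real.monotoneOn_rpow_Ici_of_exponent_nonneg hp).mono Set.Icc_subset_Ici_self
  have h := hmono.sum_le_integral
  rw [integral_rpow (by left; linarith), Real.zero_rpow (by linarith), sub_zero] at h
  simpa using h

section Run

variable {ι E : Type*} [NormedAddCommGroup E] [InnerProductSpace ℝ E]
  {y : ι → E} {a : ℕ → E} {T : ℕ}

theorem mul_le_inner_of_forall_add {u : E} {γ : ℝ} (hγ : ∀ k, γ ≤ ⟪u, y k⟫)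
    (ha0 : a 0 = 0) (hstep : ∀ t < T, ∃ k, a (t + 1) = a t + y k) :
    ∀ t ≤ T, γ * t ≤ ⟪u, a t⟫ := by
  intro t
  induction t with
  | zero => simp [ha0]
  | succ t ih =>
    intro ht
    obtain ⟨k, hk⟩ := hstep t ht
    rw [hk, inner_add_right, Nat.cast_succ, mul_add_one]
    linarith [ih (Nat.le_of_succ_le ht), hγ k]

theorem norm_sq_le_of_forall_add {R : ℝ} (hy : ∀ k, ‖y k‖ ≤ R) {c : ℕ → ℝ}
    (ha0 : a 0 = 0)
    (hstep : ∀ t < T, ∃ k, a (t + 1) = a t + y k ∧ ⟪a t, y k⟫ ≤ c t) :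
    ∀ t ≤ T, ‖a t‖ ^ 2 ≤ R ^ 2 * t + 2 * ∑ s ∈ range t, c s := by
  intro t
  induction t with
  | zero => simp [ha0]
  | succ t ih =>
    intro ht
    obtain ⟨k, hk, hc⟩ := hstep t ht
    have hyR : ‖y k‖ ^ 2 ≤ R ^ 2 := pow_le_pow_left₀ (norm_nonneg _) (hy k) 2
    rw [hk, norm_add_sq_real, sum_range_succ, Nat.cast_succ]
    linarith [ih (Nat.le_of_succ_le ht)]

theorem norm_sq_le_rpow_of_forall_add {R b p : ℝ} (hy : ∀ k, ‖y k‖ ≤ R) (hb : 0 ≤ b)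
    (hp : 0 ≤ p) (ha0 : a 0 = 0)
    (hstep : ∀ t < T, ∃ k, a (t + 1) = a t + y k ∧ ⟪a t, y k⟫ ≤ b * (t : ℝ) ^ p) :
    ‖a T‖ ^ 2 ≤ R ^ 2 * T + 2 * b * (T : ℝ) ^ (p + 1) / (p + 1) :=
  calc ‖a T‖ ^ 2 ≤ R ^ 2 * T + 2 * (b * ∑ s ∈ range T, (s : ℝ) ^ p) := by
        simpa only [mul_sum] using norm_sq_le_of_forall_add hy ha0 hstep T le_rfl
    _ ≤ R ^ 2 * T + 2 * (b * ((T : ℝ) ^ (p + 1) / (p + 1))) := by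
        gcongr
        exact sum_range_rpow_le_s9 hp T
    _ = R ^ 2 * T + 2 * b * (T : ℝ) ^ (p + 1) / (p + 1) := by ring

end Run

theorem inv_le_margin_ratio {γ N m R b q s t : ℝ} (hγ : 0 < γ) (hb : 0 < b) (hq : 0 < q)
    (hs : 0 < s) (ht : 0 < t) (hN : γ * t ≤ N) (hN2 : N ^ 2 ≤ R ^ 2 * t + 2 * b * (s * t) / q)
    (hm : b * s / N ≤ m) : ((R ^ 2 / b) * s⁻¹ + 2 / q)⁻¹ ≤ m / γ := by
  have hNpos : 0 < N := (mul_pos hγ ht).trans_le hN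
  have hD : 0 < (R ^ 2 / b) * s⁻¹ + 2 / q := by positivity
  rw [inv_le_iff_one_le_mul₀' hD, ← mul_div_assoc, le_div_iff₀ hγ, one_mul]
  calc γ ≤ N / t := by rwa [le_div_iff₀ ht]
    _ = N ^ 2 / (t * N) := by field_simp
    _ ≤ (R ^ 2 * t + 2 * b * (s * t) / q) / (t * N) := by gcongr
    _ = ((R ^ 2 / b) * s⁻¹ + 2 / q) * (b * s / N) := by field_simp
    _ ≤ ((R ^ 2 / b) * s⁻¹ + 2 / q) * m := by gcongr

theorem stmt9_general {E : Type*} [NormedAddCommGroup E] [InnerProductSpace ℝ E]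
    {n : ℕ} (hn : 0 < n) (y : Fin n → E)
    (R : ℝ) (hR : IsGreatest (Set.range (fun k : Fin n => ‖y k‖)) R)
    (u : E) (hu : ‖u‖ = 1) (γd : ℝ) (hγd : 0 < γd)
    (hmargin : ∀ k : Fin n, γd ≤ ⟪u, y k⟫)
    (ε b : ℝ) (hε1 : ε ≤ 1) (hb : 0 < b)
    (tc : ℕ) (htc : 1 ≤ tc) (a : ℕ → E) (ha0 : a 0 = 0)
    (hrun : ∀ t : ℕ, t < tc → ∃ k : Fin n, a (t + 1) = a t + y k ∧
      ⟪a t, y k⟫ ≤ if t = 0 then 0 else b * (t : ℝ) ^ (1 - ε))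
    (hconv : ∀ k : Fin n, b * (tc : ℝ) ^ (1 - ε) < ⟪a tc, y k⟫) :
    (Finset.univ.inf' (Finset.univ_nonempty_iff.mpr ⟨⟨0, hn⟩⟩)
        (fun k : Fin n => ⟪(‖a tc‖)⁻¹ • a tc, y k⟫)) / γd ≥
      ((R ^ 2 / b) * (tc : ℝ) ^ (ε - 1) + 2 / (2 - ε))⁻¹ := by
  have htc0 : (0 : ℝ) < tc := by exact_mod_cast htc
  have hstep : ∀ t < tc, ∃ k, a (t + 1) = a t + y k ∧
      ⟪a t, y k⟫ ≤ b * (t : ℝ) ^ (1 - ε) := by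
    intro t ht
    obtain ⟨k, hk, hmis⟩ := hrun t ht
    refine ⟨k, hk, hmis.trans ?_⟩
    split_ifs
    · positivity
    · rfl
  have hN : γd * tc ≤ ‖a tc‖ := by
    have hdir := mul_le_inner_of_forall_add hmargin ha0
      (fun t ht => (hstep t ht).imp fun _ => And.left) tc le_rfl
    simpa [hu] using hdir.trans (real_inner_le_norm u (a tc))
  have hN2 := norm_sq_le_rpow_of_forall_add (fun k => hR.2 ⟨k, rfl⟩) hb.le
    (sub_nonneg.mpr hε1) ha0 hstep
  rw [Real.rpow_add_one htc0.ne', show 1 - ε + 1 = 2 - ε by ring] at hN2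
  have hm : b * (tc : ℝ) ^ (1 - ε) / ‖a tc‖ ≤
      Finset.univ.inf' (Finset.univ_nonempty_iff.mpr ⟨⟨0, hn⟩⟩)
        (fun k : Fin n => ⟪(‖a tc‖)⁻¹ • a tc, y k⟫) :=
    Finset.le_inf' _ _ fun k _ => by
      rw [real_inner_smul_left, inv_mul_eq_div]
      exact div_le_div_of_nonneg_right (hconv k).le (norm_nonneg _)
  rw [← neg_sub, Real.rpow_neg htc0.le]
  exact inv_le_margin_ratio hγd hb (by linarith) (by positivity) htc0 hN hN2 hm

/-- after-running estimate for a converged t-margitron run: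
γ'_d/γ_d ≥ ((R²/b)·t_c^(ε−1) + 2/(2−ε))⁻¹. -/
theorem stmt9 {E : Type*} [NormedAddCommGroup E] [InnerProductSpace ℝ E]
    {n : ℕ} (hn : 0 < n) (y : Fin n → E)
    (R : ℝ) (hR : IsGreatest (Set.range (fun k : Fin n => ‖y k‖)) R)
    (u : E) (hu : ‖u‖ = 1) (γd : ℝ) (hγd : 0 < γd)
    (hmargin : ∀ k : Fin n, γd ≤ ⟪u, y k⟫)
    (ε b : ℝ) (hε : 0 < ε) (hε1 : ε ≤ 1) (hb : 0 < b)
    (tc : ℕ) (htc : 1 ≤ tc) (a : ℕ → E) (ha0 : a 0 = 0)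
    (hrun : ∀ t : ℕ, t < tc → ∃ k : Fin n, a (t + 1) = a t + y k ∧
      ⟪a t, y k⟫ ≤ if t = 0 then 0 else b * (t : ℝ) ^ (1 - ε))
    (hconv : ∀ k : Fin n, b * (tc : ℝ) ^ (1 - ε) < ⟪a tc, y k⟫) :
    (Finset.univ.inf' (Finset.univ_nonempty_iff.mpr ⟨⟨0, hn⟩⟩)
        (fun k : Fin n => ⟪(‖a tc‖)⁻¹ • a tc, y k⟫)) / γd ≥
      ((R ^ 2 / b) * (tc : ℝ) ^ (ε - 1) + 2 / (2 - ε))⁻¹ :=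
  stmt9_general hn y R hR u hu γd hγd hmargin ε b hε1 hb tc htc a ha0 hrun hconv
end

section
/- Let 0 < ε ≤ 1, b > 0, let a : ℕ → E be an ℓ-margitron run of length T, and let N be an integer with 1 ≤ N ≤ T. Then for every t with N ≤ t ≤ T it holds that ‖a_t‖^(1+ε) ≤ R^(1+ε)·( N^(1+ε) + ((1+ε)/(2ε))·(R/γ_d)^(1−ε)·( t^ε − (N − ε + ⌊ε⌋)/N^(1−ε) ) + (1+ε)·(b/R^(1+ε))·t ), where ⌊ε⌋ is the integer part of ε. -/
/-!
A misclassified update `a ↦ a + y` has `⟪a, y⟫ ≤ b‖a‖^(1-ε)`, so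
`‖a + y‖² ≤ ‖a‖² + 2b‖a‖^(1-ε) + R²`. Raising to the power `(1+ε)/2 ≤ 1` and using the tangent
line of the concave map `z ↦ z^((1+ε)/2)` at `‖a‖²` gives
`‖a + y‖^(1+ε) ≤ ‖a‖^(1+ε) + (1+ε)b + ((1+ε)/2) R² ‖a‖^(ε-1)`.
As in the perceptron convergence proof, the margin gives `‖a_s‖ ≥ ⟪u, a_s⟫ ≥ s γ_d`, so the last
term is at most `((1+ε)/2) R² (s γ_d)^(ε-1)`. Summing from `‖a_N‖ ≤ N R` and comparing
`∑ ε s^(ε-1)` with the telescoping sum of `s^ε` (again by concavity) gives the bound.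
-/

open scoped RealInnerProductSpace
open Finset

theorem rpow_add_le_rpow_add_mul_rpow_sub_one_mul {x δ p : ℝ} (hx : 0 < x) (hδ : -x ≤ δ)
    (hp₀ : 0 ≤ p) (hp₁ : p ≤ 1) : (x + δ) ^ p ≤ x ^ p + p * x ^ (p - 1) * δ := by
  have hbern : (1 + δ / x) ^ p ≤ 1 + p * (δ / x) :=
    rpow_one_add_le_one_add_mul_self (by rwa [le_div_iff₀ hx, neg_one_mul]) hp₀ hp₁
  calc (x + δ) ^ p = x ^ p * (1 + δ / x) ^ p := by
        rw [← Real.mul_rpow hx.le (by rw [← mul_le_mul_iff_of_pos_left hx]; field_simp; linarith)]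
        congr 1; field_simp
    _ ≤ x ^ p * (1 + p * (δ / x)) := by gcongr
    _ = x ^ p + p * x ^ (p - 1) * δ := by rw [Real.rpow_sub_one hx.ne']; field_simp

theorem mul_add_one_rpow_sub_one_le {s ε : ℝ} (hs : 0 ≤ s) (hε₀ : 0 ≤ ε) (hε₁ : ε ≤ 1) :
    ε * (s + 1) ^ (ε - 1) ≤ (s + 1) ^ ε - s ^ ε := by
  have := rpow_add_le_rpow_add_mul_rpow_sub_one_mul (δ := -1) (by positivity : 0 < s + 1)
    (by linarith) hε₀ hε₁
  rw [add_neg_cancel_right] at this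
  linarith

theorem sub_le_sum_of_forall_sub_le {f g : ℕ → ℝ} {m n : ℕ} (hmn : m ≤ n)
    (h : ∀ s ∈ Ico m n, f (s + 1) - f s ≤ g s) : f n - f m ≤ ∑ s ∈ Ico m n, g s := by
  rw [← sum_Ico_sub f hmn]
  exact sum_le_sum h

theorem sum_le_sub_of_forall_le_sub {f g : ℕ → ℝ} {m n : ℕ} (hmn : m ≤ n)
    (h : ∀ s ∈ Ico m n, g s ≤ f (s + 1) - f s) : ∑ s ∈ Ico m n, g s ≤ f n - f m := by
  rw [← sum_Ico_sub f hmn]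
  exact sum_le_sum h

theorem sum_Ico_mul_rpow_sub_one_le {ε : ℝ} (hε₀ : 0 ≤ ε) (hε₁ : ε ≤ 1) {N t : ℕ}
    (hNt : N ≤ t) :
    ∑ s ∈ Ico N t, ε * (s : ℝ) ^ (ε - 1) ≤ (t : ℝ) ^ ε - (N : ℝ) ^ ε + ε * (N : ℝ) ^ (ε - 1) := by
  have htele : ∑ s ∈ Ico N t, ε * ((s : ℝ) + 1) ^ (ε - 1) ≤ (t : ℝ) ^ ε - (N : ℝ) ^ ε :=
    sum_le_sub_of_forall_le_sub (f := fun s : ℕ => (s : ℝ) ^ ε) hNt fun s _ => by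
      simpa using mul_add_one_rpow_sub_one_le s.cast_nonneg hε₀ hε₁
  calc ∑ s ∈ Ico N t, ε * (s : ℝ) ^ (ε - 1)
      ≤ ∑ s ∈ Ico N (t + 1), ε * (s : ℝ) ^ (ε - 1) :=
        sum_le_sum_of_subset_of_nonneg (Ico_subset_Ico_right t.le_succ) fun _ _ _ => by positivity
    _ = ε * (N : ℝ) ^ (ε - 1) + ∑ s ∈ Ico N t, ε * ((s : ℝ) + 1) ^ (ε - 1) := by
        rw [sum_eq_sum_Ico_succ_bot (by omega), ← sum_Ico_add']
        push_cast; rfl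
    _ ≤ _ := by linarith

theorem sum_Ico_mul_rpow_sub_one_le_rpow_sub {ε : ℝ} (hε₀ : 0 < ε) (hε₁ : ε ≤ 1) {N t : ℕ}
    (hN : 0 < N) (hNt : N ≤ t) :
    ∑ s ∈ Ico N t, ε * (s : ℝ) ^ (ε - 1)
      ≤ (t : ℝ) ^ ε - ((N : ℝ) - ε + (⌊ε⌋ : ℝ)) / (N : ℝ) ^ (1 - ε) := by
  rcases hε₁.eq_or_lt with rfl | hε₁
  · simp [Nat.cast_sub hNt]
  · have hN' : (0 : ℝ) < N := by exact_mod_cast hN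
    have hfloor : ((N : ℝ) - ε + (⌊ε⌋ : ℝ)) / (N : ℝ) ^ (1 - ε)
        = (N : ℝ) ^ ε - ε * (N : ℝ) ^ (ε - 1) := by
      rw [Int.floor_eq_zero_iff.mpr ⟨hε₀.le, hε₁⟩, Int.cast_zero, add_zero,
        div_eq_mul_inv, ← Real.rpow_neg hN'.le, neg_sub, Real.rpow_sub_one hN'.ne']
      field_simp
    rw [hfloor]
    linarith [sum_Ico_mul_rpow_sub_one_le hε₀.le hε₁.le hNt]

theorem norm_add_rpow_one_add_le {E : Type*} [NormedAddCommGroup E] [InnerProductSpace ℝ E]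
    {x v : E} {b r R ε : ℝ} (hr : 0 < r) (hrx : r ≤ ‖x‖) (hv : ‖v‖ ≤ R)
    (hxv : ⟪x, v⟫ ≤ b * ‖x‖ ^ (1 - ε)) (hε₀ : -1 ≤ ε) (hε₁ : ε ≤ 1) :
    ‖x + v‖ ^ (1 + ε) ≤ ‖x‖ ^ (1 + ε) + (1 + ε) * b + (1 + ε) / 2 * R ^ 2 * r ^ (ε - 1) := by
  have hx₀ : 0 < ‖x‖ := hr.trans_le hrx
  have hsq : ‖x + v‖ ^ 2 ≤ ‖x‖ ^ 2 + (2 * b * ‖x‖ ^ (1 - ε) + R ^ 2) := by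
    rw [norm_add_sq_real]
    nlinarith [norm_nonneg v]
  have hhalf : ∀ z : ℝ, 0 ≤ z → ∀ q : ℝ, (z ^ 2) ^ (q / 2) = z ^ q := fun z hz q => by
    rw [← Real.rpow_natCast_mul hz]; ring_nf
  have hcancel : ‖x‖ ^ (ε - 1) * ‖x‖ ^ (1 - ε) = 1 := by
    rw [← Real.rpow_add hx₀]; norm_num
  calc ‖x + v‖ ^ (1 + ε) = (‖x + v‖ ^ 2) ^ ((1 + ε) / 2) := (hhalf _ (norm_nonneg _) _).symm
    _ ≤ (‖x‖ ^ 2 + (2 * b * ‖x‖ ^ (1 - ε) + R ^ 2)) ^ ((1 + ε) / 2) := by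
        gcongr; linarith
    _ ≤ (‖x‖ ^ 2) ^ ((1 + ε) / 2)
          + (1 + ε) / 2 * (‖x‖ ^ 2) ^ ((1 + ε) / 2 - 1) * (2 * b * ‖x‖ ^ (1 - ε) + R ^ 2) :=
        rpow_add_le_rpow_add_mul_rpow_sub_one_mul (by positivity)
          (by nlinarith [sq_nonneg ‖x + v‖]) (by linarith) (by linarith)
    _ = ‖x‖ ^ (1 + ε) + (1 + ε) * b + (1 + ε) / 2 * R ^ 2 * ‖x‖ ^ (ε - 1) := by
        rw [show (1 + ε) / 2 - 1 = (ε - 1) / 2 by ring, hhalf _ hx₀.le, hhalf _ hx₀.le]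
        linear_combination (1 + ε) * b * hcancel
    _ ≤ ‖x‖ ^ (1 + ε) + (1 + ε) * b + (1 + ε) / 2 * R ^ 2 * r ^ (ε - 1) := by
        have hε' : 0 ≤ 1 + ε := by linarith
        have := Real.rpow_le_rpow_of_nonpos hr hrx (by linarith : ε - 1 ≤ 0)
        have := mul_le_mul_of_nonneg_left this (by positivity : 0 ≤ (1 + ε) / 2 * R ^ 2)
        linarith

theorem rpow_one_add_mul_div_rpow_one_sub {R γ ε : ℝ} (hR : 0 < R) (hγ : 0 < γ) :
    R ^ (1 + ε) * (R / γ) ^ (1 - ε) = R ^ 2 * γ ^ (ε - 1) := by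
  rw [Real.div_rpow hR.le hγ.le, mul_div_assoc', ← Real.rpow_add hR, div_eq_mul_inv,
    ← Real.rpow_neg hγ.le, show 1 + ε + (1 - ε) = (2 : ℕ) by norm_num, Real.rpow_natCast, neg_sub]

theorem le_of_forall_sub_le_add_rpow {f : ℕ → ℝ} {R γ ε b : ℝ} (hR : 0 < R) (hγ : 0 < γ)
    (hε₀ : 0 < ε) (hε₁ : ε ≤ 1) (hb : 0 ≤ b) {N t : ℕ} (hN : 0 < N) (hNt : N ≤ t)
    (hstart : f N ≤ (R * N) ^ (1 + ε))
    (hstep : ∀ s ∈ Ico N t,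
      f (s + 1) - f s ≤ (1 + ε) * b + (1 + ε) / 2 * R ^ 2 * (s * γ) ^ (ε - 1)) :
    f t ≤ R ^ (1 + ε) * ((N : ℝ) ^ (1 + ε)
        + ((1 + ε) / (2 * ε)) * (R / γ) ^ (1 - ε) *
            ((t : ℝ) ^ ε - ((N : ℝ) - ε + (⌊ε⌋ : ℝ)) / (N : ℝ) ^ (1 - ε))
        + (1 + ε) * (b / R ^ (1 + ε)) * t) := by
  set K := R ^ (1 + ε) * ((1 + ε) / (2 * ε) * (R / γ) ^ (1 - ε)) with hK
  have hterm : ∀ s : ℕ, (1 + ε) / 2 * R ^ 2 * (s * γ) ^ (ε - 1) = K * (ε * (s : ℝ) ^ (ε - 1)) :=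
    fun s => calc
      _ = (1 + ε) / 2 * (R ^ 2 * γ ^ (ε - 1)) * (s : ℝ) ^ (ε - 1) := by
          rw [Real.mul_rpow s.cast_nonneg hγ.le]; ring
      _ = K * (ε * (s : ℝ) ^ (ε - 1)) := by
          rw [hK, ← rpow_one_add_mul_div_rpow_one_sub hR hγ]; field_simp
  have hgrowth := sub_le_sum_of_forall_sub_le hNt hstep
  rw [sum_add_distrib, sum_const, Nat.card_Ico, nsmul_eq_mul, Nat.cast_sub hNt,
    sum_congr rfl fun s _ => hterm s, ← mul_sum] at hgrowth
  have hsum := sum_Ico_mul_rpow_sub_one_le_rpow_sub hε₀ hε₁ hN hNt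
  have hb' : R ^ (1 + ε) * (b / R ^ (1 + ε)) = b := by field_simp
  rw [Real.mul_rpow hR.le N.cast_nonneg] at hstart
  calc f t
      ≤ R ^ (1 + ε) * N ^ (1 + ε) + (t - N) * ((1 + ε) * b)
          + K * ∑ s ∈ Ico N t, ε * (s : ℝ) ^ (ε - 1) := by linarith
    _ ≤ R ^ (1 + ε) * N ^ (1 + ε) + t * ((1 + ε) * b)
          + K * ((t : ℝ) ^ ε - ((N : ℝ) - ε + (⌊ε⌋ : ℝ)) / (N : ℝ) ^ (1 - ε)) := by
        gcongr
        linarith [(N.cast_nonneg : (0 : ℝ) ≤ N)]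
    _ = _ := by linear_combination (-(1 + ε) * t) * hb'

section Run

variable {E : Type*} [SeminormedAddCommGroup E] {n : ℕ} {y : Fin n → E}
  {a : ℕ → E} {T t : ℕ}

theorem norm_le_mul_of_forall_norm_le {R : ℝ} (hyR : ∀ k, ‖y k‖ ≤ R) (ha0 : a 0 = 0)
    (hinc : ∀ s < T, ∃ k, a (s + 1) = a s + y k) (ht : t ≤ T) : ‖a t‖ ≤ t * R := by
  have := sub_le_sum_of_forall_sub_le (f := fun s => ‖a s‖) (g := fun _ => R) t.zero_le
    fun s hs => by
      obtain ⟨k, hk⟩ := hinc s ((mem_Ico.mp hs).2.trans_le ht)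
      show ‖a (s + 1)‖ - ‖a s‖ ≤ R
      linarith [hk ▸ norm_add_le (a s) (y k), hyR k]
  simpa [ha0] using this

theorem mul_le_norm_of_forall_le_inner [InnerProductSpace ℝ E] {u : E} {γ : ℝ} (hu : ‖u‖ = 1)
    (hmargin : ∀ k, γ ≤ ⟪u, y k⟫) (ha0 : a 0 = 0)
    (hinc : ∀ s < T, ∃ k, a (s + 1) = a s + y k) (ht : t ≤ T) : t * γ ≤ ‖a t‖ := by
  have := sum_le_sub_of_forall_le_sub (f := fun s => ⟪u, a s⟫) (g := fun _ => γ) t.zero_le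
    fun s hs => by
      obtain ⟨k, hk⟩ := hinc s ((mem_Ico.mp hs).2.trans_le ht)
      simpa [hk, inner_add_right] using hmargin k
  have hle : ⟪u, a t⟫ ≤ ‖a t‖ := by simpa [hu] using real_inner_le_norm u (a t)
  simp only [sum_const, Nat.card_Ico, Nat.sub_zero, nsmul_eq_mul, ha0, inner_zero_right] at this
  linarith

end Run

theorem stmt10_general {E : Type*} [NormedAddCommGroup E] [InnerProductSpace ℝ E]
    {n : ℕ} (y : Fin n → E)
    (R : ℝ) (hR : IsGreatest (Set.range (fun k : Fin n => ‖y k‖)) R)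
    (u : E) (hu : ‖u‖ = 1) (γd : ℝ) (hγd : 0 < γd)
    (hmargin : ∀ k : Fin n, γd ≤ ⟪u, y k⟫)
    (ε b : ℝ) (hε : 0 < ε) (hε1 : ε ≤ 1) (hb : 0 < b)
    (T : ℕ) (a : ℕ → E) (ha0 : a 0 = 0)
    (hrun : ∀ t : ℕ, t < T → ∃ k : Fin n, a (t + 1) = a t + y k ∧
      ⟪a t, y k⟫ ≤ if t = 0 then 0 else b * ‖a t‖ ^ (1 - ε))
    (N : ℕ) (hN1 : 1 ≤ N) :
    ∀ t : ℕ, N ≤ t → t ≤ T →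
      ‖a t‖ ^ (1 + ε) ≤ R ^ (1 + ε) * ((N : ℝ) ^ (1 + ε)
        + ((1 + ε) / (2 * ε)) * (R / γd) ^ (1 - ε) *
            ((t : ℝ) ^ ε - ((N : ℝ) - ε + (⌊ε⌋ : ℝ)) / (N : ℝ) ^ (1 - ε))
        + (1 + ε) * (b / R ^ (1 + ε)) * t) := by
  intro t hNt htT
  have hyR : ∀ k, ‖y k‖ ≤ R := fun k => hR.2 ⟨k, rfl⟩
  have hinc : ∀ s < T, ∃ k, a (s + 1) = a s + y k := fun s hs => (hrun s hs).imp fun _ => And.left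
  have hR₀ : 0 < R := by
    obtain ⟨k, -⟩ := hR.1
    have := real_inner_le_norm u (y k)
    rw [hu, one_mul] at this
    linarith [hmargin k, hyR k]
  refine le_of_forall_sub_le_add_rpow (f := fun s => ‖a s‖ ^ (1 + ε)) hR₀ hγd hε hε1 hb.le hN1 hNt
    ?_ fun s hs => ?_
  · rw [mul_comm]
    gcongr
    exact norm_le_mul_of_forall_norm_le hyR ha0 hinc (hNt.trans htT)
  · obtain ⟨hNs, hst⟩ := mem_Ico.mp hs
    obtain ⟨k, hk, hmis⟩ := hrun s (hst.trans_le htT)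
    rw [if_neg (by omega)] at hmis
    simp only [hk]
    linarith [norm_add_rpow_one_add_le (mul_pos (by exact_mod_cast hN1.trans hNs) hγd)
      (mul_le_norm_of_forall_le_inner hu hmargin ha0 hinc (hst.trans_le htT).le) (hyR k) hmis
      (by linarith) hε1]

/-- length bound for an ℓ-margitron run: for N ≤ t ≤ T,
‖a_t‖^(1+ε) ≤ R^(1+ε)·(N^(1+ε) + ((1+ε)/(2ε))·(R/γ_d)^(1−ε)·(t^ε − (N−ε+⌊ε⌋)/N^(1−ε))
 + (1+ε)·(b/R^(1+ε))·t). -/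
theorem stmt10 {E : Type*} [NormedAddCommGroup E] [InnerProductSpace ℝ E]
    {n : ℕ} (hn : 0 < n) (y : Fin n → E)
    (R : ℝ) (hR : IsGreatest (Set.range (fun k : Fin n => ‖y k‖)) R)
    (u : E) (hu : ‖u‖ = 1) (γd : ℝ) (hγd : 0 < γd)
    (hmargin : ∀ k : Fin n, γd ≤ ⟪u, y k⟫)
    (ε b : ℝ) (hε : 0 < ε) (hε1 : ε ≤ 1) (hb : 0 < b)
    (T : ℕ) (a : ℕ → E) (ha0 : a 0 = 0)
    (hrun : ∀ t : ℕ, t < T → ∃ k : Fin n, a (t + 1) = a t + y k ∧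
      ⟪a t, y k⟫ ≤ if t = 0 then 0 else b * ‖a t‖ ^ (1 - ε))
    (N : ℕ) (hN1 : 1 ≤ N) (hNT : N ≤ T) :
    ∀ t : ℕ, N ≤ t → t ≤ T →
      ‖a t‖ ^ (1 + ε) ≤ R ^ (1 + ε) * ((N : ℝ) ^ (1 + ε)
        + ((1 + ε) / (2 * ε)) * (R / γd) ^ (1 - ε) *
            ((t : ℝ) ^ ε - ((N : ℝ) - ε + (⌊ε⌋ : ℝ)) / (N : ℝ) ^ (1 - ε))
        + (1 + ε) * (b / R ^ (1 + ε)) * t) :=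
  stmt10_general y R hR u hu γd hγd hmargin ε b hε hε1 hb T a ha0 hrun N hN1
end

section
/- Let 0 < ε ≤ 1, b > 0, and let a : ℕ → E be an ℓ-margitron run of length t_c ≥ 1 that has converged after t_c updates, i.e. ⟨a_{t_c}, y_k⟩ > b·‖a_{t_c}‖^(1−ε) for every k ∈ {1, …, n}. Then the achieved directional margin γ'_d := min_k ⟨a_{t_c}/‖a_{t_c}‖, y_k⟩ satisfies γ'_d/γ_d ≥ ( ((1+ε)^(2ε−⌊ε⌋)/(2ε)^ε)·(R^(1+ε)/b) + 1 + ε )^(−1), where ⌊ε⌋ is the integer part of ε. -/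
/-!
Each update raises `⟪u, a t⟫` by at least `γd`, so `‖a t‖ ≥ t γd`. A misclassified update gives
`‖a (t+1)‖² ≤ ‖a t‖² + 2 b ‖a t‖ ^ (1 - ε) + R²`; raising this to the power `(1 + ε) / 2 ≤ 1`
(subadditivity, then Bernoulli's inequality) gives
`‖a (t+1)‖ ^ (1 + ε) ≤ ‖a t‖ ^ (1 + ε) + (1 + ε) b + R ^ (1 + ε)`, so `‖a t‖ ^ (1 + ε)` grows at most
linearly in `t`. Comparing the two growth rates at `tc` gives `γd ‖a tc‖ ^ ε ≤ R ^ (1 + ε) + (1 + ε) b`,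
while convergence gives `γ'd ≥ b / ‖a tc‖ ^ ε`. This is the claimed bound with the constant
`(1 + ε) ^ (2ε - ⌊ε⌋) / (2ε) ^ ε` replaced by `1`, and that constant is at least `1` for `0 < ε ≤ 1`.
-/

open scoped RealInnerProductSpace

lemma Real.sq_rpow_div_two {z : ℝ} (hz : 0 ≤ z) (p : ℝ) : (z ^ 2) ^ (p / 2) = z ^ p := by
  rw [← Real.rpow_natCast_mul hz]
  congr 1
  ring

lemma sq_add_two_mul_rpow_rpow_le {x b ε : ℝ} (hx : 0 < x) (hb : 0 ≤ b) (hε : -1 ≤ ε)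
    (hε1 : ε ≤ 1) :
    (x ^ 2 + 2 * b * x ^ (1 - ε)) ^ ((1 + ε) / 2) ≤ x ^ (1 + ε) + (1 + ε) * b := by
  have hxx : x ^ (1 + ε) * x ^ (1 - ε) = x ^ 2 := by
    rw [← Real.rpow_add hx]
    norm_num
  have hs : 0 ≤ 2 * b * x ^ (1 - ε) / x ^ 2 := by positivity
  calc (x ^ 2 + 2 * b * x ^ (1 - ε)) ^ ((1 + ε) / 2)
      = (x ^ 2 * (1 + 2 * b * x ^ (1 - ε) / x ^ 2)) ^ ((1 + ε) / 2) := by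
        congr 1
        field_simp
    _ = x ^ (1 + ε) * (1 + 2 * b * x ^ (1 - ε) / x ^ 2) ^ ((1 + ε) / 2) := by
        rw [Real.mul_rpow (by positivity) (by positivity), Real.sq_rpow_div_two hx.le]
    _ ≤ x ^ (1 + ε) * (1 + (1 + ε) / 2 * (2 * b * x ^ (1 - ε) / x ^ 2)) := by
        gcongr
        exact rpow_one_add_le_one_add_mul_self (by linarith) (by linarith) (by linarith)
    _ = x ^ (1 + ε) + (1 + ε) * b := by
        field_simp
        linear_combination (1 + ε) * b * hxx

lemma norm_add_rpow_le_of_inner_le {E : Type*} [NormedAddCommGroup E] [InnerProductSpace ℝ E]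
    {a y : E} {b ε : ℝ} (hb : 0 ≤ b) (hε : -1 < ε) (hε1 : ε ≤ 1)
    (hay : ⟪a, y⟫ ≤ b * ‖a‖ ^ (1 - ε)) :
    ‖a + y‖ ^ (1 + ε) ≤ ‖a‖ ^ (1 + ε) + (1 + ε) * b + ‖y‖ ^ (1 + ε) := by
  rcases eq_or_ne a 0 with rfl | ha
  · have : 0 ≤ (1 + ε) * b := mul_nonneg (by linarith) hb
    simpa [Real.zero_rpow (by linarith : 1 + ε ≠ 0)]
  have hsq : ‖a + y‖ ^ 2 ≤ (‖a‖ ^ 2 + 2 * b * ‖a‖ ^ (1 - ε)) + ‖y‖ ^ 2 := by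
    rw [norm_add_sq_real]
    linarith
  calc ‖a + y‖ ^ (1 + ε) = (‖a + y‖ ^ 2) ^ ((1 + ε) / 2) :=
        (Real.sq_rpow_div_two (norm_nonneg _) _).symm
    _ ≤ ((‖a‖ ^ 2 + 2 * b * ‖a‖ ^ (1 - ε)) + ‖y‖ ^ 2) ^ ((1 + ε) / 2) := by
        gcongr; linarith
    _ ≤ (‖a‖ ^ 2 + 2 * b * ‖a‖ ^ (1 - ε)) ^ ((1 + ε) / 2) + (‖y‖ ^ 2) ^ ((1 + ε) / 2) :=
        Real.rpow_add_le_add_rpow (by positivity) (by positivity) (by linarith) (by linarith)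
    _ ≤ ‖a‖ ^ (1 + ε) + (1 + ε) * b + ‖y‖ ^ (1 + ε) := by
        rw [Real.sq_rpow_div_two (norm_nonneg _)]
        gcongr
        exact sq_add_two_mul_rpow_rpow_le (norm_pos_iff.mpr ha) hb hε.le hε1

lemma one_le_rpow_sub_floor_div_rpow {ε : ℝ} (hε : 0 < ε) (hε1 : ε ≤ 1) :
    1 ≤ (1 + ε) ^ (2 * ε - (⌊ε⌋ : ℝ)) / (2 * ε) ^ ε := by
  rw [one_le_div (by positivity)]
  rcases hε1.lt_or_eq with hlt | rfl
  · rw [Int.floor_eq_zero_iff.mpr ⟨hε.le, hlt⟩, Int.cast_zero, sub_zero,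
      Real.rpow_mul (by positivity)]
    gcongr
    norm_cast
    nlinarith
  · norm_num

lemma div_rpow_le_inner_inv_norm_smul {E : Type*} [NormedAddCommGroup E] [InnerProductSpace ℝ E]
    {a y : E} {b ε : ℝ} (ha : a ≠ 0) (hay : b * ‖a‖ ^ (1 - ε) ≤ ⟪a, y⟫) :
    b / ‖a‖ ^ ε ≤ ⟪‖a‖⁻¹ • a, y⟫ := by
  have hA := norm_pos_iff.mpr ha
  rw [real_inner_smul_left, Real.rpow_sub hA, Real.rpow_one] at *
  calc b / ‖a‖ ^ ε = ‖a‖⁻¹ * (b * (‖a‖ / ‖a‖ ^ ε)) := by field_simp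
    _ ≤ ‖a‖⁻¹ * ⟪a, y⟫ := by gcongr

section Run

variable {E : Type*} [NormedAddCommGroup E] [InnerProductSpace ℝ E] {n : ℕ} {y : Fin n → E}
  {a : ℕ → E} {tc : ℕ}

lemma mul_le_inner_of_steps {u : E} {γ : ℝ} (hmargin : ∀ k, γ ≤ ⟪u, y k⟫) (ha0 : a 0 = 0)
    (hstep : ∀ t < tc, ∃ k, a (t + 1) = a t + y k) : ∀ t ≤ tc, t * γ ≤ ⟪u, a t⟫ := by
  intro t
  induction t with
  | zero => simp [ha0]
  | succ t ih =>
    intro ht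
    obtain ⟨k, hk⟩ := hstep t ht
    rw [hk, inner_add_right, Nat.cast_succ, add_mul, one_mul]
    exact add_le_add (ih (Nat.le_of_succ_le ht)) (hmargin k)

lemma norm_rpow_le_mul_of_steps {R b ε : ℝ} (hR : ∀ k, ‖y k‖ ≤ R) (hb : 0 ≤ b) (hε : -1 < ε)
    (hε1 : ε ≤ 1) (ha0 : a 0 = 0)
    (hstep : ∀ t < tc, ∃ k, a (t + 1) = a t + y k ∧ ⟪a t, y k⟫ ≤ b * ‖a t‖ ^ (1 - ε)) :
    ∀ t ≤ tc, ‖a t‖ ^ (1 + ε) ≤ t * (R ^ (1 + ε) + (1 + ε) * b) := by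
  intro t
  induction t with
  | zero => simp [ha0, Real.zero_rpow (by linarith : 1 + ε ≠ 0)]
  | succ t ih =>
    intro ht
    obtain ⟨k, hk, hmis⟩ := hstep t ht
    have hyk : ‖y k‖ ^ (1 + ε) ≤ R ^ (1 + ε) :=
      Real.rpow_le_rpow (norm_nonneg _) (hR k) (by linarith)
    rw [hk, Nat.cast_succ]
    linarith [norm_add_rpow_le_of_inner_le hb hε hε1 hmis, ih (Nat.le_of_succ_le ht)]

lemma mul_norm_rpow_le_of_steps {u : E} (hu : ‖u‖ ≤ 1) {γ R b ε : ℝ} (hγ : 0 ≤ γ)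
    (hmargin : ∀ k, γ ≤ ⟪u, y k⟫) (hR : ∀ k, ‖y k‖ ≤ R) (hb : 0 ≤ b) (hε : -1 < ε) (hε1 : ε ≤ 1)
    (ha0 : a 0 = 0)
    (hstep : ∀ t < tc, ∃ k, a (t + 1) = a t + y k ∧ ⟪a t, y k⟫ ≤ b * ‖a t‖ ^ (1 - ε))
    (ha : a tc ≠ 0) :
    γ * ‖a tc‖ ^ ε ≤ R ^ (1 + ε) + (1 + ε) * b := by
  set A := ‖a tc‖
  set K := R ^ (1 + ε) + (1 + ε) * b
  have hA : 0 < A := norm_pos_iff.mpr ha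
  have hlow : tc * γ ≤ A := calc
    tc * γ ≤ ⟪u, a tc⟫ :=
      mul_le_inner_of_steps hmargin ha0 (fun t ht => (hstep t ht).imp fun _ => And.left) tc le_rfl
    _ ≤ ‖u‖ * A := real_inner_le_norm u (a tc)
    _ ≤ A := mul_le_of_le_one_left hA.le hu
  have hup : A ^ (1 + ε) ≤ tc * K := norm_rpow_le_mul_of_steps hR hb hε hε1 ha0 hstep tc le_rfl
  have hK : 0 < K := pos_of_mul_pos_right (hup.trans_lt' (by positivity)) tc.cast_nonneg
  refine le_of_mul_le_mul_left ?_ hA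
  calc A * (γ * A ^ ε) = γ * A ^ (1 + ε) := by rw [Real.rpow_add hA, Real.rpow_one]; ring
    _ ≤ γ * (tc * K) := by gcongr
    _ ≤ A * K := by nlinarith

end Run

theorem stmt12_general {E : Type*} [NormedAddCommGroup E] [InnerProductSpace ℝ E]
    {n : ℕ} (hn : 0 < n) (y : Fin n → E)
    (R : ℝ) (hR : IsGreatest (Set.range (fun k : Fin n => ‖y k‖)) R)
    (u : E) (hu : ‖u‖ = 1) (γd : ℝ) (hγd : 0 < γd)
    (hmargin : ∀ k : Fin n, γd ≤ ⟪u, y k⟫)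
    (ε b : ℝ) (hε : 0 < ε) (hε1 : ε ≤ 1) (hb : 0 < b)
    (tc : ℕ) (a : ℕ → E) (ha0 : a 0 = 0)
    (hrun : ∀ t : ℕ, t < tc → ∃ k : Fin n, a (t + 1) = a t + y k ∧
      ⟪a t, y k⟫ ≤ if t = 0 then 0 else b * ‖a t‖ ^ (1 - ε))
    (hconv : ∀ k : Fin n, b * ‖a tc‖ ^ (1 - ε) < ⟪a tc, y k⟫) :
    (Finset.univ.inf' (Finset.univ_nonempty_iff.mpr ⟨⟨0, hn⟩⟩)
        (fun k : Fin n => ⟪(‖a tc‖)⁻¹ • a tc, y k⟫)) / γd ≥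
      (((1 + ε) ^ (2 * ε - (⌊ε⌋ : ℝ)) / (2 * ε) ^ ε) * (R ^ (1 + ε) / b)
        + 1 + ε)⁻¹ := by
  have hstep : ∀ t < tc, ∃ k, a (t + 1) = a t + y k ∧ ⟪a t, y k⟫ ≤ b * ‖a t‖ ^ (1 - ε) := by
    intro t ht
    obtain ⟨k, hk, hmis⟩ := hrun t ht
    refine ⟨k, hk, hmis.trans ?_⟩
    split_ifs
    · positivity
    · rfl
  have ha : a tc ≠ 0 := by
    intro h
    have := (hconv ⟨0, hn⟩).trans_le' (by positivity)
    simp [h] at this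
  have hbound : γd * ‖a tc‖ ^ ε ≤ R ^ (1 + ε) + (1 + ε) * b :=
    mul_norm_rpow_le_of_steps hu.le hγd.le hmargin (fun k => hR.2 ⟨k, rfl⟩) hb.le (by linarith)
      hε1 ha0 hstep ha
  have hmin : b / ‖a tc‖ ^ ε ≤ Finset.univ.inf' (Finset.univ_nonempty_iff.mpr ⟨⟨0, hn⟩⟩)
      (fun k : Fin n => ⟪(‖a tc‖)⁻¹ • a tc, y k⟫) :=
    Finset.le_inf' _ _ fun k _ => div_rpow_le_inner_inv_norm_smul ha (hconv k).le
  calc _ ≤ (R ^ (1 + ε) / b + 1 + ε)⁻¹ := by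
        have hR0 : 0 ≤ R := by obtain ⟨k, hk⟩ := hR.1; exact hk ▸ norm_nonneg _
        gcongr
        exact le_mul_of_one_le_left (by positivity) (one_le_rpow_sub_floor_div_rpow hε hε1)
    _ = b / (R ^ (1 + ε) + (1 + ε) * b) := by rw [← inv_div]; field_simp; ring
    _ ≤ b / ‖a tc‖ ^ ε / γd := by rw [div_div]; gcongr; linarith
    _ ≤ _ := by gcongr

/-- a converged ℓ-margitron run with 0 < ε ≤ 1 achieves
γ'_d/γ_d ≥ (((1+ε)^(2ε−⌊ε⌋)/(2ε)^ε)·(R^(1+ε)/b) + 1 + ε)⁻¹. -/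
theorem stmt12 {E : Type*} [NormedAddCommGroup E] [InnerProductSpace ℝ E]
    {n : ℕ} (hn : 0 < n) (y : Fin n → E)
    (R : ℝ) (hR : IsGreatest (Set.range (fun k : Fin n => ‖y k‖)) R)
    (u : E) (hu : ‖u‖ = 1) (γd : ℝ) (hγd : 0 < γd)
    (hmargin : ∀ k : Fin n, γd ≤ ⟪u, y k⟫)
    (ε b : ℝ) (hε : 0 < ε) (hε1 : ε ≤ 1) (hb : 0 < b)
    (tc : ℕ) (htc : 1 ≤ tc) (a : ℕ → E) (ha0 : a 0 = 0)
    (hrun : ∀ t : ℕ, t < tc → ∃ k : Fin n, a (t + 1) = a t + y k ∧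
      ⟪a t, y k⟫ ≤ if t = 0 then 0 else b * ‖a t‖ ^ (1 - ε))
    (hconv : ∀ k : Fin n, b * ‖a tc‖ ^ (1 - ε) < ⟪a tc, y k⟫) :
    (Finset.univ.inf' (Finset.univ_nonempty_iff.mpr ⟨⟨0, hn⟩⟩)
        (fun k : Fin n => ⟪(‖a tc‖)⁻¹ • a tc, y k⟫)) / γd ≥
      (((1 + ε) ^ (2 * ε - (⌊ε⌋ : ℝ)) / (2 * ε) ^ ε) * (R ^ (1 + ε) / b)
        + 1 + ε)⁻¹ :=
  stmt12_general hn y R hR u hu γd hγd hmargin ε b hε hε1 hb tc a ha0 hrun hconv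
end

section
/- Let 0 < ε < 1, b > 0, and let a : ℕ → E be an ℓ-margitron run of length t_c ≥ 1 that has converged after t_c updates, i.e. ⟨a_{t_c}, y_k⟩ > b·‖a_{t_c}‖^(1−ε) for every k ∈ {1, …, n}, and let γ'_d := min_k ⟨a_{t_c}/‖a_{t_c}‖, y_k⟩ be the achieved directional margin. Let N be a positive integer satisfying either (t_c ≥ N and N ≥ ((1+ε)/2)·(R/γ'_d)^(1−ε)) or (t_c ≥ N·((1 − ε·N^(−1))/(1 − ε))^(1/ε)). Then γ'_d/γ_d ≥ ( (R^(1+ε)/b)·( N^(1+ε) + ((1+ε)/(2ε))·(R/γ'_d)^(1−ε)·( t_c^ε − (N − ε)/N^(1−ε) ) )·t_c^(−1) + 1 + ε )^(−1). -/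
/-! Along the run, `⟪w, a t⟫ ≥ γ t` for every unit `w` with `⟪w, y k⟫ ≥ γ`; with `w = u` this
gives `‖a tc‖ ≥ γd tc`, and with `w = a tc / ‖a tc‖` it gives `‖a t‖ ≥ γ'd t`. A misclassified
update raises `‖a‖²` by at most `2b‖a‖^(1-ε) + R²`, so by concavity of `x ↦ x ^ ((1+ε)/2)` it raises
`‖a‖^(1+ε)` by at most `(1+ε)b + (1+ε)/2 R² (γ'd t)^(ε-1)`. Summing from `N` (where
`‖a N‖ ≤ N R`) to `tc`, and bounding `∑ t^(ε-1)` by an integral, bounds `‖a tc‖^(1+ε)`.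
Convergence gives `γ'd ‖a tc‖ > b ‖a tc‖^(1-ε)`, hence `γ'd / γd ≥ b tc / ‖a tc‖^(1+ε)`. -/

open scoped RealInnerProductSpace
open Finset

lemma add_rpow_le_rpow_add_mul_rpow_sub_one {x y p : ℝ} (hx : 0 < x) (hxy : -x ≤ y)
    (hp0 : 0 ≤ p) (hp1 : p ≤ 1) : (x + y) ^ p ≤ x ^ p + p * y * x ^ (p - 1) := by
  have hyx : -1 ≤ y / x := by rwa [le_div_iff₀ hx, neg_one_mul]
  calc (x + y) ^ p = x ^ p * (1 + y / x) ^ p := by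
        rw [← Real.mul_rpow hx.le (by linarith), mul_add, mul_one, mul_div_cancel₀ _ hx.ne']
    _ ≤ x ^ p * (1 + p * (y / x)) := by
        gcongr; exact rpow_one_add_le_one_add_mul_self hyx hp0 hp1
    _ = x ^ p + p * y * x ^ (p - 1) := by
        rw [Real.rpow_sub_one hx.ne']; ring

lemma sum_Ico_rpow_sub_one_le {p : ℝ} (hp0 : 0 < p) (hp1 : p ≤ 1) {N T : ℕ} (hN : 1 ≤ N)
    (hNT : N ≤ T) :
    ∑ t ∈ Ico N T, (t : ℝ) ^ (p - 1) ≤ (N : ℝ) ^ (p - 1) + ((T : ℝ) ^ p - (N : ℝ) ^ p) / p := by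
  rcases hNT.eq_or_lt with rfl | hlt
  · simp only [Ico_self, sum_empty, sub_self, zero_div, add_zero]
    positivity
  -- each later term is below the increment of `t ↦ (t - 1) ^ p / p`, by concavity of `x ↦ x ^ p`
  have htel := (sum_le_sum (f := fun t : ℕ ↦ (t : ℝ) ^ (p - 1)) fun t ht ↦ by
      have ht1 : (1 : ℝ) ≤ t := Nat.one_le_cast.mpr (by have := (mem_Ico.mp ht).1; omega)
      have := add_rpow_le_rpow_add_mul_rpow_sub_one (x := (t : ℝ)) (y := -1) (by linarith)
        (by linarith) hp0.le hp1
      rw [← sub_eq_add_neg] at this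
      push_cast
      rw [add_sub_cancel_right, ← sub_div, le_div_iff₀ hp0]
      linarith).trans_eq (sum_Ico_sub (fun t : ℕ ↦ ((t : ℝ) - 1) ^ p / p) (by omega : N + 1 ≤ T))
  have hT1 : (1 : ℝ) ≤ T := Nat.one_le_cast.mpr (by omega)
  have hmono : ((T : ℝ) - 1) ^ p ≤ (T : ℝ) ^ p :=
    Real.rpow_le_rpow (by linarith) (by linarith) hp0.le
  push_cast at htel
  rw [add_sub_cancel_right] at htel
  rw [sum_eq_sum_Ico_succ_bot hlt]
  gcongr
  rw [sub_div]
  linarith [div_le_div_of_nonneg_right hmono hp0.le]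

lemma margin_ratio_ge_of_rpow_le {M γ γ' b T X S ε : ℝ} (hM : 0 < M) (hγ : 0 < γ) (hb : 0 < b)
    (hT : 0 < T) (hγT : γ * T ≤ M) (hγ' : b * M ^ (1 - ε) < γ' * M)
    (hK : M ^ (1 + ε) ≤ X * S + (1 + ε) * b * T) : (X / b * S * T⁻¹ + 1 + ε)⁻¹ ≤ γ' / γ := by
  have hD : 0 < X * S + (1 + ε) * b * T := (Real.rpow_pos_of_pos hM _).trans_le hK
  have hγ'0 : 0 < γ' :=
    pos_of_mul_pos_left ((by positivity : 0 < b * M ^ (1 - ε)).trans hγ') hM.le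
  have heq : X / b * S * T⁻¹ + 1 + ε = (X * S + (1 + ε) * b * T) / (b * T) := by
    field_simp
    ring
  rw [heq, inv_div, div_le_div_iff₀ hD hγ]
  calc b * T * γ = b * (γ * T) := by ring
    _ ≤ b * M := by gcongr
    _ = b * M ^ (1 - ε) * M ^ ε := by rw [mul_assoc, ← Real.rpow_add hM]; norm_num
    _ ≤ γ' * M * M ^ ε := by gcongr
    _ = γ' * M ^ (1 + ε) := by rw [Real.rpow_add hM, Real.rpow_one, mul_assoc]
    _ ≤ γ' * (X * S + (1 + ε) * b * T) := by gcongr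

lemma le_of_mul_rpow_one_sub_le {ε x t : ℝ} (hε : 0 < ε) (hε1 : ε < 1) (hx : 1 ≤ x)
    (h : x * ((1 - ε * x⁻¹) / (1 - ε)) ^ (1 / ε) ≤ t) : x ≤ t := by
  have hbase : 1 ≤ (1 - ε * x⁻¹) / (1 - ε) := by
    rw [one_le_div (by linarith)]
    nlinarith [inv_le_one_of_one_le₀ hx]
  exact (le_mul_of_one_le_right (by positivity) (Real.one_le_rpow hbase (by positivity))).trans h

section Run

variable {E ι : Type*} [NormedAddCommGroup E] {y : ι → E} {a : ℕ → E} {T : ℕ}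

lemma run_norm_le (ha0 : a 0 = 0) (hstep : ∀ t < T, ∃ k, a (t + 1) = a t + y k) {R : ℝ}
    (hR : ∀ k, ‖y k‖ ≤ R) : ∀ t ≤ T, ‖a t‖ ≤ t * R := by
  intro t
  induction t with
  | zero => simp [ha0]
  | succ t ih =>
    intro ht
    obtain ⟨k, hk⟩ := hstep t (by omega)
    rw [hk]
    push_cast
    linarith [norm_add_le (a t) (y k), ih (by omega), hR k]

variable [InnerProductSpace ℝ E]

lemma norm_add_rpow_le {x v : E} {b R ε : ℝ} (hx : x ≠ 0) (hε0 : -1 ≤ ε) (hε1 : ε ≤ 1)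
    (hv : ‖v‖ ≤ R) (hxv : ⟪x, v⟫ ≤ b * ‖x‖ ^ (1 - ε)) :
    ‖x + v‖ ^ (1 + ε) ≤ ‖x‖ ^ (1 + ε) + (1 + ε) * b + (1 + ε) / 2 * R ^ 2 * ‖x‖ ^ (ε - 1) := by
  have hx0 : 0 < ‖x‖ := norm_pos_iff.mpr hx
  have hsq : ∀ r : ℝ, 0 ≤ r → ∀ s : ℝ, (r ^ 2) ^ s = r ^ (2 * s) := fun r hr s ↦ by
    rw [← Real.rpow_natCast, ← Real.rpow_mul hr]; norm_num
  have hgrow : ‖x + v‖ ^ 2 ≤ ‖x‖ ^ 2 + (2 * b * ‖x‖ ^ (1 - ε) + R ^ 2) := by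
    rw [norm_add_sq_real]
    nlinarith [norm_nonneg v]
  calc ‖x + v‖ ^ (1 + ε) = (‖x + v‖ ^ 2) ^ ((1 + ε) / 2) := by
        rw [hsq _ (norm_nonneg _)]; congr 1; ring
    _ ≤ (‖x‖ ^ 2 + (2 * b * ‖x‖ ^ (1 - ε) + R ^ 2)) ^ ((1 + ε) / 2) := by
        gcongr; linarith
    _ ≤ (‖x‖ ^ 2) ^ ((1 + ε) / 2)
          + (1 + ε) / 2 * (2 * b * ‖x‖ ^ (1 - ε) + R ^ 2) * (‖x‖ ^ 2) ^ ((1 + ε) / 2 - 1) :=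
        add_rpow_le_rpow_add_mul_rpow_sub_one (by positivity)
          (by nlinarith [sq_nonneg ‖x + v‖]) (by linarith) (by linarith)
    _ = ‖x‖ ^ (1 + ε) + (1 + ε) * b + (1 + ε) / 2 * R ^ 2 * ‖x‖ ^ (ε - 1) := by
        have hcancel : ‖x‖ ^ (1 - ε) * ‖x‖ ^ (ε - 1) = 1 := by
          rw [← Real.rpow_add hx0]; norm_num
        rw [hsq _ hx0.le, hsq _ hx0.le, show 2 * ((1 + ε) / 2) = 1 + ε by ring,
          show 2 * ((1 + ε) / 2 - 1) = ε - 1 by ring]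
        linear_combination (1 + ε) * b * hcancel

lemma run_mul_le_inner (ha0 : a 0 = 0) (hstep : ∀ t < T, ∃ k, a (t + 1) = a t + y k) {w : E}
    {c : ℝ} (hc : ∀ k, c ≤ ⟪w, y k⟫) : ∀ t ≤ T, c * t ≤ ⟪w, a t⟫ := by
  intro t
  induction t with
  | zero => simp [ha0]
  | succ t ih =>
    intro ht
    obtain ⟨k, hk⟩ := hstep t (by omega)
    rw [hk, inner_add_right]
    push_cast
    linarith [ih (by omega), hc k]

lemma run_mul_le_norm (ha0 : a 0 = 0) (hstep : ∀ t < T, ∃ k, a (t + 1) = a t + y k) {w : E}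
    (hw : ‖w‖ ≤ 1) {c : ℝ} (hc : ∀ k, c ≤ ⟪w, y k⟫) (t : ℕ) (ht : t ≤ T) : c * t ≤ ‖a t‖ :=
  calc c * t ≤ ⟪w, a t⟫ := run_mul_le_inner ha0 hstep hc t ht
    _ ≤ ‖w‖ * ‖a t‖ := real_inner_le_norm _ _
    _ ≤ ‖a t‖ := mul_le_of_le_one_left (norm_nonneg _) hw

lemma run_rpow_norm_le_add_sum {b R c ε : ℝ} {N : ℕ} (hN : 1 ≤ N) (hNT : N ≤ T) (hε0 : -1 ≤ ε)
    (hε1 : ε ≤ 1) (hR : ∀ k, ‖y k‖ ≤ R) (hc : 0 < c) (hlow : ∀ t ≤ T, c * t ≤ ‖a t‖)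
    (hmis : ∀ t, N ≤ t → t < T → ∃ k, a (t + 1) = a t + y k ∧ ⟪a t, y k⟫ ≤ b * ‖a t‖ ^ (1 - ε)) :
    ‖a T‖ ^ (1 + ε) ≤ ‖a N‖ ^ (1 + ε) + ((T : ℝ) - N) * ((1 + ε) * b)
      + (1 + ε) / 2 * R ^ 2 * c ^ (ε - 1) * ∑ t ∈ Ico N T, (t : ℝ) ^ (ε - 1) := by
  have hcoef : 0 ≤ (1 + ε) / 2 * R ^ 2 := mul_nonneg (by linarith) (sq_nonneg R)
  have htel := (sum_Ico_sub (fun t ↦ ‖a t‖ ^ (1 + ε)) hNT).symm.trans_le <| sum_le_sum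
    (g := fun t : ℕ ↦ (1 + ε) * b + (1 + ε) / 2 * R ^ 2 * c ^ (ε - 1) * (t : ℝ) ^ (ε - 1))
    fun t ht ↦ by
      obtain ⟨hNt, htT⟩ := mem_Ico.mp ht
      obtain ⟨k, hk, hmisk⟩ := hmis t hNt htT
      have hct : 0 < c * t := mul_pos hc (Nat.cast_pos.mpr (by omega))
      have hat : c * t ≤ ‖a t‖ := hlow t htT.le
      have hpow : ‖a t‖ ^ (ε - 1) ≤ c ^ (ε - 1) * (t : ℝ) ^ (ε - 1) := by
        rw [← Real.mul_rpow hc.le (Nat.cast_nonneg t)]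
        exact Real.rpow_le_rpow_of_nonpos hct hat (by linarith)
      have hnext := norm_add_rpow_le (norm_pos_iff.mp (hct.trans_le hat)) hε0 hε1 (hR k) hmisk
      have := mul_le_mul_of_nonneg_left hpow hcoef
      simp only [hk]
      linarith
  rw [sum_add_distrib, sum_const, Nat.card_Ico, ← mul_sum, nsmul_eq_mul, Nat.cast_sub hNT] at htel
  linarith

lemma run_rpow_norm_le {b R c ε : ℝ} {N : ℕ} (ha0 : a 0 = 0)
    (hstep : ∀ t < T, ∃ k, a (t + 1) = a t + y k) (hN : 1 ≤ N) (hNT : N ≤ T) (hε0 : 0 < ε)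
    (hε1 : ε ≤ 1) (hb : 0 ≤ b) (hR0 : 0 ≤ R) (hR : ∀ k, ‖y k‖ ≤ R) (hc : 0 < c)
    (hlow : ∀ t ≤ T, c * t ≤ ‖a t‖)
    (hmis : ∀ t, N ≤ t → t < T → ∃ k, a (t + 1) = a t + y k ∧ ⟪a t, y k⟫ ≤ b * ‖a t‖ ^ (1 - ε)) :
    ‖a T‖ ^ (1 + ε) ≤ R ^ (1 + ε) * ((N : ℝ) ^ (1 + ε) + (1 + ε) / (2 * ε) * (R / c) ^ (1 - ε)
      * ((T : ℝ) ^ ε - ((N : ℝ) - ε) / (N : ℝ) ^ (1 - ε))) + (1 + ε) * b * T := by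
  have hN0 : (0 : ℝ) < N := Nat.cast_pos.mpr hN
  have hstart : ‖a N‖ ^ (1 + ε) ≤ (N : ℝ) ^ (1 + ε) * R ^ (1 + ε) := by
    rw [← Real.mul_rpow hN0.le hR0]
    exact Real.rpow_le_rpow (norm_nonneg _) (run_norm_le ha0 hstep hR N hNT) (by linarith)
  have hdrift : ((T : ℝ) - N) * ((1 + ε) * b) ≤ (1 + ε) * b * T := by
    nlinarith [mul_nonneg (by linarith : (0 : ℝ) ≤ 1 + ε) hb]
  have hR2 : R ^ (1 + ε) * (R / c) ^ (1 - ε) = R ^ 2 * c ^ (ε - 1) := by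
    rw [Real.div_rpow hR0 hc.le, mul_div_assoc', ← Real.rpow_add' hR0 (by norm_num),
      div_eq_mul_inv, ← Real.rpow_neg hc.le, neg_sub, show 1 + ε + (1 - ε) = (2 : ℕ) by norm_num,
      Real.rpow_natCast]
  have hNε : ((N : ℝ) - ε) / (N : ℝ) ^ (1 - ε) = (N : ℝ) ^ ε - ε * (N : ℝ) ^ (ε - 1) := by
    rw [div_eq_iff (by positivity), sub_mul, mul_assoc, ← Real.rpow_add hN0,
      ← Real.rpow_add hN0]
    norm_num
  calc ‖a T‖ ^ (1 + ε)
      ≤ ‖a N‖ ^ (1 + ε) + ((T : ℝ) - N) * ((1 + ε) * b)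
        + (1 + ε) / 2 * R ^ 2 * c ^ (ε - 1) * ∑ t ∈ Ico N T, (t : ℝ) ^ (ε - 1) :=
        run_rpow_norm_le_add_sum hN hNT (by linarith) hε1 hR hc hlow hmis
    _ ≤ (N : ℝ) ^ (1 + ε) * R ^ (1 + ε) + (1 + ε) * b * T + (1 + ε) / 2
        * (R ^ (1 + ε) * (R / c) ^ (1 - ε)) * ((N : ℝ) ^ (ε - 1) + ((T : ℝ) ^ ε - N ^ ε) / ε) := by
        have hcoef : 0 ≤ (1 + ε) / 2 * R ^ 2 * c ^ (ε - 1) := by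
          have : 0 < 1 + ε := by linarith
          positivity
        rw [hR2, ← mul_assoc]
        linarith [mul_le_mul_of_nonneg_left (sum_Ico_rpow_sub_one_le hε0 hε1 hN hNT) hcoef]
    _ = _ := by
        rw [hNε]
        field_simp
        ring

end Run

/-- after-running estimate for a converged ℓ-margitron run with
0 < ε < 1, for any positive integer N satisfying one of the two constraints. -/
theorem stmt13 {E : Type*} [NormedAddCommGroup E] [InnerProductSpace ℝ E]
    {n : ℕ} (hn : 0 < n) (y : Fin n → E)
    (R : ℝ) (hR : IsGreatest (Set.range (fun k : Fin n => ‖y k‖)) R)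
    (u : E) (hu : ‖u‖ = 1) (γd : ℝ) (hγd : 0 < γd)
    (hmargin : ∀ k : Fin n, γd ≤ ⟪u, y k⟫)
    (ε b : ℝ) (hε : 0 < ε) (hε1 : ε < 1) (hb : 0 < b)
    (tc : ℕ) (htc : 1 ≤ tc) (a : ℕ → E) (ha0 : a 0 = 0)
    (hrun : ∀ t : ℕ, t < tc → ∃ k : Fin n, a (t + 1) = a t + y k ∧
      ⟪a t, y k⟫ ≤ if t = 0 then 0 else b * ‖a t‖ ^ (1 - ε))
    (hconv : ∀ k : Fin n, b * ‖a tc‖ ^ (1 - ε) < ⟪a tc, y k⟫)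
    (γ'd : ℝ)
    (hγ'd : γ'd = Finset.univ.inf' (Finset.univ_nonempty_iff.mpr ⟨⟨0, hn⟩⟩)
        (fun k : Fin n => ⟪(‖a tc‖)⁻¹ • a tc, y k⟫))
    (N : ℕ) (hN : 0 < N)
    (hNc : (N ≤ tc ∧ ((1 + ε) / 2) * (R / γ'd) ^ (1 - ε) ≤ (N : ℝ)) ∨
      ((N : ℝ) * ((1 - ε * (N : ℝ)⁻¹) / (1 - ε)) ^ (1 / ε) ≤ (tc : ℝ))) :
    γ'd / γd ≥ ((R ^ (1 + ε) / b) * ((N : ℝ) ^ (1 + ε)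
        + ((1 + ε) / (2 * ε)) * (R / γ'd) ^ (1 - ε) *
            ((tc : ℝ) ^ ε - ((N : ℝ) - ε) / (N : ℝ) ^ (1 - ε))) * (tc : ℝ)⁻¹
      + 1 + ε)⁻¹ := by
  have hyR : ∀ k, ‖y k‖ ≤ R := fun k ↦ hR.2 ⟨k, rfl⟩
  have hstep : ∀ t < tc, ∃ k, a (t + 1) = a t + y k := fun t ht ↦ (hrun t ht).imp fun _ ↦ And.left
  have hM : 0 < ‖a tc‖ := by
    refine norm_pos_iff.mpr fun h ↦ ?_
    have := hconv ⟨0, hn⟩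
    rw [h, norm_zero, Real.zero_rpow (by linarith), inner_zero_left, mul_zero] at this
    exact this.false
  have hγ' : ∀ k, γ'd ≤ ⟪‖a tc‖⁻¹ • a tc, y k⟫ :=
    fun k ↦ hγ'd ▸ Finset.inf'_le _ (Finset.mem_univ k)
  have hγ'M : b * ‖a tc‖ ^ (1 - ε) < γ'd * ‖a tc‖ := by
    obtain ⟨k, -, hk⟩ := Finset.exists_mem_eq_inf' (Finset.univ_nonempty_iff.mpr ⟨⟨0, hn⟩⟩)
      (fun k : Fin n ↦ ⟪(‖a tc‖)⁻¹ • a tc, y k⟫)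
    rw [hγ'd, hk, real_inner_smul_left, mul_right_comm, inv_mul_cancel₀ hM.ne', one_mul]
    exact hconv k
  have hγ'0 : 0 < γ'd :=
    pos_of_mul_pos_left ((by positivity : 0 < b * ‖a tc‖ ^ (1 - ε)).trans hγ'M) hM.le
  have hNtc : N ≤ tc := by
    rcases hNc with ⟨h, -⟩ | h
    · exact h
    · exact_mod_cast le_of_mul_rpow_one_sub_le hε hε1 (Nat.one_le_cast.mpr hN) h
  have hunit : ‖‖a tc‖⁻¹ • a tc‖ ≤ 1 := by
    rw [norm_smul, norm_inv, norm_norm, inv_mul_cancel₀ hM.ne']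
  have hnorm := run_rpow_norm_le ha0 hstep hN hNtc hε hε1.le hb.le
    ((norm_nonneg _).trans (hyR ⟨0, hn⟩)) hyR hγ'0 (run_mul_le_norm ha0 hstep hunit hγ')
    fun t hNt htT ↦ by simpa [if_neg (by omega : t ≠ 0)] using hrun t htT
  exact margin_ratio_ge_of_rpow_le hM hγd hb (by positivity)
    (run_mul_le_norm ha0 hstep hu.le hmargin tc le_rfl) hγ'M hnorm
end

section
/- Let 1 < ε < 2 and b > 0, and let a : ℕ → E be a t-margitron run of length T. Then T ≤ R²/γ_d² + ((2/(2−ε))·b/γ_d²)^(1/ε). Moreover, if the run has converged after t_c ≥ 1 updates, i.e. ⟨a_{t_c}, y_k⟩ > b·t_c^(1−ε) for every k, then the achieved directional margin γ'_d := min_k ⟨a_{t_c}/‖a_{t_c}‖, y_k⟩ satisfies γ'_d/γ_d ≥ ( (R²/b)·T_b^(ε−1) + 2/(2−ε) )^(−1), where T_b = R²/γ_d² + ((2/(2−ε))·b/γ_d²)^(1/ε). -/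
open scoped RealInnerProductSpace

/-!
Perceptron-style argument. Along the run, `⟪u, a t⟫` grows by at least `γ_d` per update, so
`‖a t‖ ≥ γ_d t`. Each update is misclassified, so `‖a t‖²` grows by at most
`R² + 2 b t^(1-ε)`; by concavity of `s ↦ s^(2-ε)` these increments sum to at most
`R² t + (2/(2-ε)) b t^(2-ε)`. Comparing the two bounds gives `γ_d² T ≤ R² + (2/(2-ε)) b T^(1-ε)`,
which solves to `T ≤ T_b`, and `γ_d ‖a T‖ ≤ R² + (2/(2-ε)) b T^(1-ε)`, which together with the
convergence condition `⟪a T, y k⟫ > b T^(1-ε)` bounds the achieved margin.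
-/

lemma mul_rpow_sub_one_le_rpow_sub_rpow_sub_one {p x : ℝ} (hp0 : 0 ≤ p) (hp1 : p ≤ 1)
    (hx : 1 ≤ x) : p * x ^ (p - 1) ≤ x ^ p - (x - 1) ^ p := by
  have hx0 : 0 < x := one_pos.trans_le hx
  have hinv : x⁻¹ ≤ 1 := inv_le_one_of_one_le₀ hx
  have hbern : (1 + -x⁻¹) ^ p ≤ 1 + p * -x⁻¹ :=
    rpow_one_add_le_one_add_mul_self (by linarith) hp0 hp1
  have hsub : (x - 1) ^ p = x ^ p * (1 + -x⁻¹) ^ p := by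
    rw [← Real.mul_rpow hx0.le (by linarith)]
    congr 1
    field_simp
    ring
  have hpow : x ^ (p - 1) = x ^ p * x⁻¹ := by
    rw [Real.rpow_sub_one hx0.ne', div_eq_mul_inv]
  rw [hsub, hpow]
  nlinarith [mul_le_mul_of_nonneg_left hbern (Real.rpow_nonneg hx0.le p)]

/-- Since `1 - ε ≤ 0`, `t - A ≤ D t^(1-ε) ≤ D (t - A)^(1-ε)`, i.e. `(t - A)^ε ≤ D`. -/
lemma le_add_rpow_one_div_of_le_add_mul_rpow {t A D ε : ℝ} (hA : 0 ≤ A) (hD : 0 ≤ D)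
    (hε : 1 ≤ ε) (h : t ≤ A + D * t ^ (1 - ε)) : t ≤ A + D ^ (1 / ε) := by
  rcases le_or_gt t A with htA | htA
  · linarith [Real.rpow_nonneg hD (1 / ε)]
  have hs : 0 < t - A := by linarith
  have hmono : t ^ (1 - ε) ≤ (t - A) ^ (1 - ε) :=
    Real.rpow_le_rpow_of_nonpos hs (by linarith) (by linarith)
  have hpow : (t - A) ^ ε ≤ D :=
    calc (t - A) ^ ε = (t - A) * (t - A) ^ (ε - 1) := by
          rw [Real.rpow_sub_one hs.ne']; field_simp
      _ ≤ D * (t - A) ^ (1 - ε) * (t - A) ^ (ε - 1) := by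
          gcongr
          nlinarith [mul_le_mul_of_nonneg_left hmono hD]
      _ = D := by rw [mul_assoc, ← Real.rpow_add hs]; norm_num
  have hroot : t - A ≤ D ^ (1 / ε) := by
    calc t - A = ((t - A) ^ ε) ^ (1 / ε) := by
          rw [← Real.rpow_mul hs.le, mul_one_div_cancel (by linarith), Real.rpow_one]
      _ ≤ D ^ (1 / ε) := by gcongr
  linarith

structure IsMargitronRun {E ι : Type*} [NormedAddCommGroup E] [InnerProductSpace ℝ E]
    (y : ι → E) (b ε : ℝ) (T : ℕ) (a : ℕ → E) : Prop where
  zero : a 0 = 0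
  step : ∀ t < T, ∃ k, a (t + 1) = a t + y k ∧
    ⟪a t, y k⟫ ≤ if t = 0 then 0 else b * (t : ℝ) ^ (1 - ε)

namespace IsMargitronRun

variable {E ι : Type*} [NormedAddCommGroup E] [InnerProductSpace ℝ E]
  {y : ι → E} {b ε : ℝ} {T : ℕ} {a : ℕ → E}

lemma mul_le_inner (run : IsMargitronRun y b ε T a) {u : E} {γ : ℝ}
    (hmargin : ∀ k, γ ≤ ⟪u, y k⟫) : ∀ t ≤ T, γ * t ≤ ⟪u, a t⟫ := by
  intro t
  induction t with
  | zero => simp [run.zero]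
  | succ t ih =>
    intro ht
    obtain ⟨k, hk, -⟩ := run.step t ht
    rw [hk, inner_add_right]
    push_cast
    linarith [ih (by omega), hmargin k]

lemma mul_le_norm (run : IsMargitronRun y b ε T a) {u : E} (hu : ‖u‖ = 1) {γ : ℝ}
    (hmargin : ∀ k, γ ≤ ⟪u, y k⟫) {t : ℕ} (ht : t ≤ T) : γ * t ≤ ‖a t‖ := by
  have := real_inner_le_norm u (a t)
  rw [hu, one_mul] at this
  exact (run.mul_le_inner hmargin t ht).trans this

lemma norm_sq_le (run : IsMargitronRun y b ε T a) {R : ℝ} (hR : ∀ k, ‖y k‖ ≤ R)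
    (hb : 0 ≤ b) (hε : 1 ≤ ε) (hε2 : ε < 2) {t : ℕ} (ht1 : 1 ≤ t) (ht : t ≤ T) :
    ‖a t‖ ^ 2 ≤ R ^ 2 * t + 2 / (2 - ε) * b * ((t : ℝ) - 1) ^ (2 - ε) := by
  have hyR : ∀ k, ‖y k‖ ^ 2 ≤ R ^ 2 := fun k =>
    pow_le_pow_left₀ (norm_nonneg _) (hR k) 2
  induction t, ht1 using Nat.le_induction with
  | base =>
    obtain ⟨k, hk, -⟩ := run.step 0 (by omega)
    rw [hk, run.zero, zero_add]
    norm_num [Real.zero_rpow (by linarith : 2 - ε ≠ 0), hyR k]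
  | succ t ht1 ih =>
    obtain ⟨k, hk, hmis⟩ := run.step t (by omega)
    rw [if_neg (by omega)] at hmis
    have ht1' : (1 : ℝ) ≤ t := by exact_mod_cast ht1
    have hconc := mul_rpow_sub_one_le_rpow_sub_rpow_sub_one (p := 2 - ε) (by linarith)
      (by linarith) ht1'
    rw [show 2 - ε - 1 = 1 - ε by ring] at hconc
    -- `2 b t^(1-ε)` is the increment of `(2/(2-ε)) b s^(2-ε)` bounded by concavity
    have hinc : 2 * (b * (t : ℝ) ^ (1 - ε)) ≤
        2 / (2 - ε) * b * ((t : ℝ) ^ (2 - ε) - ((t : ℝ) - 1) ^ (2 - ε)) := by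
      have := mul_le_mul_of_nonneg_left hconc
        (by positivity : 0 ≤ 2 / (2 - ε) * b)
      have hε2' : 2 - ε ≠ 0 := by linarith
      calc 2 * (b * (t : ℝ) ^ (1 - ε)) = 2 / (2 - ε) * b * ((2 - ε) * (t : ℝ) ^ (1 - ε)) := by
            field_simp
        _ ≤ _ := this
    rw [hk, norm_add_sq_real]
    push_cast
    rw [add_sub_cancel_right]
    nlinarith [ih (by omega), hyR k]

lemma mul_norm_le (run : IsMargitronRun y b ε T a) {u : E} (hu : ‖u‖ = 1) {γ : ℝ}
    (hmargin : ∀ k, γ ≤ ⟪u, y k⟫) {R : ℝ} (hR : ∀ k, ‖y k‖ ≤ R) (hb : 0 ≤ b) (hε : 1 ≤ ε)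
    (hε2 : ε < 2) {t : ℕ} (ht1 : 1 ≤ t) (ht : t ≤ T) :
    γ * ‖a t‖ ≤ R ^ 2 + 2 / (2 - ε) * b * (t : ℝ) ^ (1 - ε) := by
  have ht1' : (1 : ℝ) ≤ t := by exact_mod_cast ht1
  have ht0 : (0 : ℝ) < t := by linarith
  have hsq := run.norm_sq_le hR hb hε hε2 ht1 ht
  have hmono : ((t : ℝ) - 1) ^ (2 - ε) ≤ (t : ℝ) ^ (1 - ε) * t := by
    rw [← Real.rpow_add_one ht0.ne', show 1 - ε + 1 = 2 - ε by ring]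
    exact Real.rpow_le_rpow (by linarith) (by linarith) (by linarith)
  have hlow := run.mul_le_norm hu hmargin ht
  refine le_of_mul_le_mul_right ?_ ht0
  calc γ * ‖a t‖ * t = ‖a t‖ * (γ * t) := by ring
    _ ≤ ‖a t‖ ^ 2 := by nlinarith [norm_nonneg (a t)]
    _ ≤ _ := by nlinarith [mul_le_mul_of_nonneg_left hmono (by positivity : 0 ≤ 2 / (2 - ε) * b)]

lemma length_le (run : IsMargitronRun y b ε T a) {u : E} (hu : ‖u‖ = 1) {γ : ℝ} (hγ : 0 < γ)
    (hmargin : ∀ k, γ ≤ ⟪u, y k⟫) {R : ℝ} (hR : ∀ k, ‖y k‖ ≤ R) (hb : 0 ≤ b) (hε : 1 ≤ ε)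
    (hε2 : ε < 2) : (T : ℝ) ≤ R ^ 2 / γ ^ 2 + (2 / (2 - ε) * b / γ ^ 2) ^ (1 / ε) := by
  have hD : 0 ≤ 2 / (2 - ε) * b / γ ^ 2 := by
    have : 0 < 2 - ε := by linarith
    positivity
  rcases T.eq_zero_or_pos with rfl | hT
  · push_cast
    positivity
  refine le_add_rpow_one_div_of_le_add_mul_rpow (by positivity) hD hε ?_
  have hkey := run.mul_norm_le hu hmargin hR hb hε hε2 hT le_rfl
  have hlow := run.mul_le_norm hu hmargin le_rfl
  rw [div_mul_eq_mul_div, ← add_div, le_div_iff₀ (by positivity)]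
  nlinarith [mul_le_mul_of_nonneg_left hlow hγ.le]

lemma inv_mul_le_margin (run : IsMargitronRun y b ε T a) {u : E} (hu : ‖u‖ = 1) {γ : ℝ}
    (hγ : 0 < γ) (hmargin : ∀ k, γ ≤ ⟪u, y k⟫) {R : ℝ} (hR : ∀ k, ‖y k‖ ≤ R) (hb : 0 < b)
    (hε : 1 ≤ ε) (hε2 : ε < 2) (hT : 1 ≤ T) {S : ℝ} (hTS : (T : ℝ) ≤ S) {k : ι}
    (hconv : b * (T : ℝ) ^ (1 - ε) < ⟪a T, y k⟫) :
    (R ^ 2 / b * S ^ (ε - 1) + 2 / (2 - ε))⁻¹ * γ ≤ ⟪‖a T‖⁻¹ • a T, y k⟫ := by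
  have hT0 : (0 : ℝ) < T := by exact_mod_cast hT
  have hN : 0 < ‖a T‖ := by
    nlinarith [run.mul_le_norm hu hmargin le_rfl]
  have hQ : 0 < R ^ 2 / b * S ^ (ε - 1) + 2 / (2 - ε) := by
    have : 0 < 2 - ε := by linarith
    have : 0 ≤ S ^ (ε - 1) := Real.rpow_nonneg (hT0.le.trans hTS) _
    positivity
  have hST : 1 ≤ S ^ (ε - 1) * (T : ℝ) ^ (1 - ε) := by
    calc (1 : ℝ) = (T : ℝ) ^ (ε - 1) * (T : ℝ) ^ (1 - ε) := by
          rw [← Real.rpow_add hT0]; norm_num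
      _ ≤ S ^ (ε - 1) * (T : ℝ) ^ (1 - ε) := by gcongr
  have hbound : γ * ‖a T‖ ≤ (R ^ 2 / b * S ^ (ε - 1) + 2 / (2 - ε)) * (b * (T : ℝ) ^ (1 - ε)) :=
    calc γ * ‖a T‖ ≤ R ^ 2 + 2 / (2 - ε) * b * (T : ℝ) ^ (1 - ε) :=
          run.mul_norm_le hu hmargin hR hb.le hε hε2 hT le_rfl
      _ ≤ R ^ 2 * (S ^ (ε - 1) * (T : ℝ) ^ (1 - ε)) + 2 / (2 - ε) * b * (T : ℝ) ^ (1 - ε) := by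
          nlinarith [sq_nonneg R]
      _ = _ := by field_simp
  rw [real_inner_smul_left, inv_mul_eq_div, inv_mul_eq_div, div_le_div_iff₀ hQ hN]
  linarith [mul_le_mul_of_nonneg_left hconv.le hQ.le]

end IsMargitronRun

/-- a t-margitron run with 1 < ε < 2 has length
T ≤ T_b := R²/γ_d² + ((2/(2−ε))·b/γ_d²)^(1/ε); if moreover it has converged after
T ≥ 1 updates then γ'_d/γ_d ≥ ((R²/b)·T_b^(ε−1) + 2/(2−ε))⁻¹. -/
theorem stmt16 {E : Type*} [NormedAddCommGroup E] [InnerProductSpace ℝ E]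
    {n : ℕ} (hn : 0 < n) (y : Fin n → E)
    (R : ℝ) (hR : IsGreatest (Set.range (fun k : Fin n => ‖y k‖)) R)
    (u : E) (hu : ‖u‖ = 1) (γd : ℝ) (hγd : 0 < γd)
    (hmargin : ∀ k : Fin n, γd ≤ ⟪u, y k⟫)
    (ε b : ℝ) (hε : 1 < ε) (hε2 : ε < 2) (hb : 0 < b)
    (T : ℕ) (a : ℕ → E) (ha0 : a 0 = 0)
    (hrun : ∀ t : ℕ, t < T → ∃ k : Fin n, a (t + 1) = a t + y k ∧
      ⟪a t, y k⟫ ≤ if t = 0 then 0 else b * (t : ℝ) ^ (1 - ε))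
    (Tb : ℝ) (hTb : Tb = R ^ 2 / γd ^ 2 + ((2 / (2 - ε)) * b / γd ^ 2) ^ (1 / ε)) :
    (T : ℝ) ≤ Tb ∧
    (1 ≤ T → (∀ k : Fin n, b * (T : ℝ) ^ (1 - ε) < ⟪a T, y k⟫) →
      (Finset.univ.inf' (Finset.univ_nonempty_iff.mpr ⟨⟨0, hn⟩⟩)
          (fun k : Fin n => ⟪(‖a T‖)⁻¹ • a T, y k⟫)) / γd ≥
        ((R ^ 2 / b) * Tb ^ (ε - 1) + 2 / (2 - ε))⁻¹) := by
  have run : IsMargitronRun y b ε T a := ⟨ha0, hrun⟩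
  have hRk : ∀ k, ‖y k‖ ≤ R := fun k => hR.2 ⟨k, rfl⟩
  have hlen : (T : ℝ) ≤ Tb :=
    hTb ▸ run.length_le hu hγd hmargin hRk hb.le hε.le hε2
  refine ⟨hlen, fun hT hconv => ?_⟩
  rw [ge_iff_le, le_div_iff₀ hγd]
  exact Finset.le_inf' _ _ fun k _ =>
    run.inv_mul_le_margin hu hγd hmargin hRk hb hε.le hε2 hT hlen (hconv k)
end

section
/- Let ε > 0 and b > 0, and let a : ℕ → E be a t-margitron run of length T. Then for every t with 1 ≤ t ≤ T one has a_t ≠ 0 and the normalised margin threshold C(t) := b·t^(1−ε)/‖a_t‖ satisfies C(t) ≤ (b/γ_d)·t^(−ε); similarly, if a is an ℓ-margitron run of length T, then for every 1 ≤ t ≤ T the threshold C(t) := b·‖a_t‖^(−ε) satisfies C(t) ≤ (b/γ_d^ε)·t^(−ε). -/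
open scoped RealInnerProductSpace

/-!
Whatever the misclassification rule, each update adds some `y k`, whose component along `u`
is at least `γd`. Hence `⟪u, a t⟫ ≥ γd * t` and, as `u` is a unit vector, `‖a t‖ ≥ γd * t`.
Both threshold bounds follow by substituting this lower bound for `‖a t‖`.
-/

section Run

variable {E : Type*} [NormedAddCommGroup E] [InnerProductSpace ℝ E] {ι : Type*}

def IsUpdateRun (y : ι → E) (T : ℕ) (a : ℕ → E) : Prop :=
  a 0 = 0 ∧ ∀ t < T, ∃ k, a (t + 1) = a t + y k

theorem IsUpdateRun.mul_le_inner {y : ι → E} {T : ℕ} {a : ℕ → E} (ha : IsUpdateRun y T a)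
    {u : E} {γ : ℝ} (hmargin : ∀ k, γ ≤ ⟪u, y k⟫) {t : ℕ} (ht : t ≤ T) :
    γ * t ≤ ⟪u, a t⟫ := by
  induction t with
  | zero => simp [ha.1]
  | succ s ih =>
    obtain ⟨k, hk⟩ := ha.2 s ht
    rw [hk, inner_add_right]
    push_cast
    linarith [ih (Nat.le_of_succ_le ht), hmargin k]

theorem IsUpdateRun.mul_le_norm {y : ι → E} {T : ℕ} {a : ℕ → E} (ha : IsUpdateRun y T a)
    {u : E} (hu : ‖u‖ = 1) {γ : ℝ} (hmargin : ∀ k, γ ≤ ⟪u, y k⟫) {t : ℕ} (ht : t ≤ T) :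
    γ * t ≤ ‖a t‖ :=
  calc γ * t ≤ ⟪u, a t⟫ := ha.mul_le_inner hmargin ht
    _ ≤ ‖u‖ * ‖a t‖ := real_inner_le_norm u (a t)
    _ = ‖a t‖ := by rw [hu, one_mul]

end Run

section Threshold

variable {γ t N b : ℝ} (hγ : 0 < γ) (ht : 0 < t) (hN : γ * t ≤ N) (hb : 0 ≤ b)
include hγ ht hN hb

theorem mul_rpow_one_sub_div_le (ε : ℝ) :
    b * t ^ (1 - ε) / N ≤ b / γ * t ^ (-ε) :=
  calc b * t ^ (1 - ε) / N ≤ b * t ^ (1 - ε) / (γ * t) :=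
        div_le_div_of_nonneg_left (by positivity) (by positivity) hN
    _ = b / γ * (t ^ (1 - ε) / t) := by field_simp
    _ = b / γ * t ^ (-ε) := by rw [← Real.rpow_sub_one ht.ne']; ring_nf

theorem mul_rpow_neg_le {ε : ℝ} (hε : 0 ≤ ε) :
    b * N ^ (-ε) ≤ b / γ ^ ε * t ^ (-ε) :=
  calc b * N ^ (-ε) ≤ b * (γ * t) ^ (-ε) := mul_le_mul_of_nonneg_left
        (Real.rpow_le_rpow_of_nonpos (by positivity) hN (neg_nonpos.mpr hε)) hb
    _ = b / γ ^ ε * t ^ (-ε) := by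
        rw [Real.mul_rpow hγ.le ht.le, Real.rpow_neg hγ.le]; ring

end Threshold

theorem stmt19_general {E : Type*} [NormedAddCommGroup E] [InnerProductSpace ℝ E]
    {n : ℕ} (y : Fin n → E)
    (u : E) (hu : ‖u‖ = 1) (γd : ℝ) (hγd : 0 < γd)
    (hmargin : ∀ k : Fin n, γd ≤ ⟪u, y k⟫)
    (ε b : ℝ) (hε : 0 < ε) (hb : 0 < b)
    (T : ℕ) (a : ℕ → E) (ha0 : a 0 = 0) :
    ((∀ t : ℕ, t < T → ∃ k : Fin n, a (t + 1) = a t + y k ∧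
        ⟪a t, y k⟫ ≤ if t = 0 then 0 else b * (t : ℝ) ^ (1 - ε)) →
      ∀ t : ℕ, 1 ≤ t → t ≤ T → a t ≠ 0 ∧
        b * (t : ℝ) ^ (1 - ε) / ‖a t‖ ≤ (b / γd) * (t : ℝ) ^ (-ε)) ∧
    ((∀ t : ℕ, t < T → ∃ k : Fin n, a (t + 1) = a t + y k ∧
        ⟪a t, y k⟫ ≤ if t = 0 then 0 else b * ‖a t‖ ^ (1 - ε)) →
      ∀ t : ℕ, 1 ≤ t → t ≤ T → a t ≠ 0 ∧
        b * ‖a t‖ ^ (-ε) ≤ (b / γd ^ ε) * (t : ℝ) ^ (-ε)) := by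
  have norm_bound : ∀ {P : ℕ → Fin n → Prop},
      (∀ t < T, ∃ k, a (t + 1) = a t + y k ∧ P t k) →
      ∀ t : ℕ, 1 ≤ t → t ≤ T → a t ≠ 0 ∧ γd * t ≤ ‖a t‖ := by
    intro P hrun t ht1 htT
    have hN := IsUpdateRun.mul_le_norm ⟨ha0, fun s hs => (hrun s hs).imp fun _ => And.left⟩
      hu hmargin htT
    have ht : (0 : ℝ) < t := Nat.cast_pos.mpr ht1
    exact ⟨norm_pos_iff.mp (lt_of_lt_of_le (by positivity) hN), hN⟩
  refine ⟨fun hrun t ht1 htT => ?_, fun hrun t ht1 htT => ?_⟩ <;>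
    obtain ⟨hne, hN⟩ := norm_bound hrun t ht1 htT
  · exact ⟨hne, mul_rpow_one_sub_div_le hγd (Nat.cast_pos.mpr ht1) hN hb.le ε⟩
  · exact ⟨hne, mul_rpow_neg_le hγd (Nat.cast_pos.mpr ht1) hN hb.le hε.le⟩

/-- for a t-margitron run, for 1 ≤ t ≤ T one has a_t ≠ 0 and
C(t) = b·t^(1−ε)/‖a_t‖ ≤ (b/γ_d)·t^(−ε); for an ℓ-margitron run, a_t ≠ 0 and
C(t) = b·‖a_t‖^(−ε) ≤ (b/γ_d^ε)·t^(−ε). -/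
theorem stmt19 {E : Type*} [NormedAddCommGroup E] [InnerProductSpace ℝ E]
    {n : ℕ} (hn : 0 < n) (y : Fin n → E)
    (R : ℝ) (hR : IsGreatest (Set.range (fun k : Fin n => ‖y k‖)) R)
    (u : E) (hu : ‖u‖ = 1) (γd : ℝ) (hγd : 0 < γd)
    (hmargin : ∀ k : Fin n, γd ≤ ⟪u, y k⟫)
    (ε b : ℝ) (hε : 0 < ε) (hb : 0 < b)
    (T : ℕ) (a : ℕ → E) (ha0 : a 0 = 0) :
    ((∀ t : ℕ, t < T → ∃ k : Fin n, a (t + 1) = a t + y k ∧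
        ⟪a t, y k⟫ ≤ if t = 0 then 0 else b * (t : ℝ) ^ (1 - ε)) →
      ∀ t : ℕ, 1 ≤ t → t ≤ T → a t ≠ 0 ∧
        b * (t : ℝ) ^ (1 - ε) / ‖a t‖ ≤ (b / γd) * (t : ℝ) ^ (-ε)) ∧
    ((∀ t : ℕ, t < T → ∃ k : Fin n, a (t + 1) = a t + y k ∧
        ⟪a t, y k⟫ ≤ if t = 0 then 0 else b * ‖a t‖ ^ (1 - ε)) →
      ∀ t : ℕ, 1 ≤ t → t ≤ T → a t ≠ 0 ∧
        b * ‖a t‖ ^ (-ε) ≤ (b / γd ^ ε) * (t : ℝ) ^ (-ε)) :=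
  stmt19_general y u hu γd hγd hmargin ε b hε hb T a ha0
end
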